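/- arXiv:2409.14421 — 8 statements merged into one kernel-verified Lean document; each statement's English description precedes it below -/
import Mathlib

section
/- Let V be a finite-dimensional real inner product space and let h be a Lie subalgebra of so(V) (the skew-adjoint endomorphisms of V under the commutator bracket) such that V is an irreducible h-module (the inclusion action is automatically faithful). If there exists a nonzero h-equivariant linear map from V to h, where h carries the adjoint action, then h is a simple Lie algebra and V is isomorphic to h (with the adjoint action) as an h-module. -/
open RealInnerProductSpace

attribute [local instance 100] LieRing.ofAssociativeRing

section Helpers

variable {V : Type*} [NormedAddCommGroup V] [InnerProductSpace ℝ V] [FiniteDimensional ℝ V]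

lemma aux_trace_eq_sum_inner {ι : Type*} [Fintype ι] [DecidableEq ι]
    (b : OrthonormalBasis ι ℝ V) (T : Module.End ℝ V) :
    LinearMap.trace ℝ V T = ∑ i, ⟪b i, T (b i)⟫ := by
  rw [LinearMap.trace_eq_matrix_trace ℝ b.toBasis, Matrix.trace]
  congr 1
  ext i
  rw [Matrix.diag_apply, LinearMap.toMatrix_apply, OrthonormalBasis.coe_toBasis,
    OrthonormalBasis.coe_toBasis_repr_apply, OrthonormalBasis.repr_apply_apply]

lemma aux_form_eq_trace {ι : Type*} [Fintype ι] [DecidableEq ι]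
    (b : OrthonormalBasis ι ℝ V) (A C : Module.End ℝ V) :
    ∑ i, ⟪A (b i), C (b i)⟫ = LinearMap.trace ℝ V (LinearMap.adjoint A * C) := by
  rw [aux_trace_eq_sum_inner b]
  refine Finset.sum_congr rfl fun i _ => ?_
  rw [Module.End.mul_apply, LinearMap.adjoint_inner_right]

lemma aux_invariance (D A C : Module.End ℝ V) (hD : LinearMap.adjoint D = -D) :
    LinearMap.trace ℝ V (LinearMap.adjoint ⁅D, A⁆ * C)
      + LinearMap.trace ℝ V (LinearMap.adjoint A * ⁅D, C⁆) = 0 := by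
  have hb : (⁅D, A⁆ : Module.End ℝ V) = D * A - A * D := rfl
  have hc : (⁅D, C⁆ : Module.End ℝ V) = D * C - C * D := rfl
  rw [hb, hc, map_sub]
  have h1 : LinearMap.adjoint (D * A) = LinearMap.adjoint A * LinearMap.adjoint D :=
    LinearMap.adjoint_comp D A
  have h2 : LinearMap.adjoint (A * D) = LinearMap.adjoint D * LinearMap.adjoint A :=
    LinearMap.adjoint_comp A D
  rw [h1, h2, hD]
  have := LinearMap.trace_mul_comm ℝ D (LinearMap.adjoint A * C)
  simp only [mul_neg, neg_mul, sub_mul, mul_sub, map_sub, map_neg, mul_assoc] at *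
  linarith [this]

end Helpers

set_option maxHeartbeats 2000000 in
set_option synthInstance.maxHeartbeats 400000 in
/-- Let `V` be a finite-dimensional real inner product space and `h` a Lie
subalgebra of `so(V)` (skew-adjoint endomorphisms, commutator bracket) acting irreducibly
on `V`.  If there is a nonzero `h`-equivariant linear map `V → h` (with `h` carrying the
adjoint action), then `h` is a simple Lie algebra and `V ≅ h` as an `h`-module. -/
theorem simple_and_adjoint_of_equivariant_map
    {V : Type*} [NormedAddCommGroup V] [InnerProductSpace ℝ V] [FiniteDimensional ℝ V]
    (h : LieSubalgebra ℝ (Module.End ℝ V))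
    (hskew : ∀ A ∈ h, ∀ x y : V, ⟪A x, y⟫ = - ⟪x, A y⟫)
    (hVne : ∃ v : V, v ≠ 0)
    (hirr : ∀ W : Submodule ℝ V, (∀ A ∈ h, ∀ w ∈ W, A w ∈ W) → W = ⊥ ∨ W = ⊤)
    (hequiv : ∃ f : V →ₗ[ℝ] h, f ≠ 0 ∧ ∀ (A : h) (v : V), f ((A : Module.End ℝ V) v) = ⁅A, f v⁆) :
    LieAlgebra.IsSimple ℝ h ∧
      ∃ e : V ≃ₗ[ℝ] h, ∀ (A : h) (v : V), e ((A : Module.End ℝ V) v) = ⁅A, e v⁆ := by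
  classical
  obtain ⟨f, hf0, hfe⟩ := hequiv
  -- skew elements have adjoint = -A
  have hadj : ∀ A : h, LinearMap.adjoint (A : Module.End ℝ V) = -(A : Module.End ℝ V) := by
    intro A
    refine ((LinearMap.eq_adjoint_iff _ _).mpr fun x y => ?_).symm
    simp [hskew A.1 A.2 x y]
  -- f is injective
  have hker : LinearMap.ker f = ⊥ := by
    have hkinv : ∀ A ∈ h, ∀ w ∈ LinearMap.ker f, A w ∈ LinearMap.ker f := by
      intro A hA w hw
      have := hfe ⟨A, hA⟩ w
      simp only [LinearMap.mem_ker] at hw ⊢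
      rw [this, hw, lie_zero]
    rcases hirr (LinearMap.ker f) hkinv with hk | hk
    · exact hk
    · exact absurd (LinearMap.ker_eq_top.mp hk) hf0
  have hinj : Function.Injective f := LinearMap.ker_eq_bot.mp hker
  -- inner product structure on h
  let b := stdOrthonormalBasis ℝ V
  letI innh : Inner ℝ h := ⟨fun A C => ∑ i, ⟪(A : Module.End ℝ V) (b i), (C : Module.End ℝ V) (b i)⟫⟩
  have inner_def : ∀ A C : h,
      ⟪A, C⟫ = ∑ i, ⟪(A : Module.End ℝ V) (b i), (C : Module.End ℝ V) (b i)⟫ := fun _ _ => rfl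
  letI core : InnerProductSpace.Core ℝ h :=
    { inner := innh.inner
      conj_inner_symm := by
        intro A C
        simp only [inner_def, starRingEnd_apply, star_trivial]
        exact Finset.sum_congr rfl fun i _ => real_inner_comm _ _
      re_inner_nonneg := by
        intro A
        simp only [RCLike.re_to_real, inner_def]
        exact Finset.sum_nonneg fun i _ => real_inner_self_nonneg
      add_left := by
        intro A A' C
        have hc : ((A + A' : h) : Module.End ℝ V) = (A : Module.End ℝ V) + A' := rfl
        simp only [inner_def, hc, LinearMap.add_apply, inner_add_left,
          Finset.sum_add_distrib]
      smul_left := by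
        intro A C r
        have hc : ((r • A : h) : Module.End ℝ V) = r • (A : Module.End ℝ V) := rfl
        simp only [inner_def, starRingEnd_apply, star_trivial, hc,
          LinearMap.smul_apply, real_inner_smul_left, Finset.mul_sum]
      definite := by
        intro A hA
        simp only [inner_def] at hA
        have hz : ∀ i, (A : Module.End ℝ V) (b i) = 0 := by
          intro i
          have := (Finset.sum_eq_zero_iff_of_nonneg
            (fun i _ => real_inner_self_nonneg)).mp hA i (Finset.mem_univ i)
          exact inner_self_eq_zero.mp this
        have : (A : Module.End ℝ V) = 0 := b.toBasis.ext fun i => by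
          simpa using hz i
        exact Subtype.ext this }
  letI : NormedAddCommGroup h := core.toNormedAddCommGroup
  letI : InnerProductSpace ℝ h := InnerProductSpace.ofCore core.toCore
  -- invariance of the form
  have hinv : ∀ (D A C : h), ⟪⁅D, A⁆, C⟫ + ⟪A, ⁅D, C⁆⟫ = 0 := by
    intro D A C
    have h1 : ((⁅D, A⁆ : h) : Module.End ℝ V) = ⁅(D : Module.End ℝ V), (A : Module.End ℝ V)⁆ := rfl
    have h2 : ((⁅D, C⁆ : h) : Module.End ℝ V) = ⁅(D : Module.End ℝ V), (C : Module.End ℝ V)⁆ := rfl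
    rw [inner_def, inner_def, h1, h2, aux_form_eq_trace, aux_form_eq_trace]
    exact aux_invariance _ _ _ (hadj D)
  -- the range of f
  set I : Submodule ℝ h := LinearMap.range f with hI
  have hIinv : ∀ (A : h) (C : h), C ∈ I → ⁅A, C⁆ ∈ I := by
    rintro A C ⟨v, rfl⟩
    exact ⟨(A : Module.End ℝ V) v, hfe A v⟩
  -- orthogonal complement is trivial
  have hbot : ∀ x : h, x ∈ I → x ∈ Iᗮ → x = 0 := by
    intro x hxI hxO
    have := (Submodule.mem_orthogonal _ _).mp hxO x hxI
    exact inner_self_eq_zero.mp this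
  have hJ : Iᗮ = ⊥ := by
    rw [Submodule.eq_bot_iff]
    intro B hB
    have hJinv : ∀ A : h, ⁅A, B⁆ ∈ Iᗮ := by
      intro A
      rw [Submodule.mem_orthogonal]
      intro C hC
      have h1 := hinv A C B
      have h2 : ⟪⁅A, C⁆, B⟫ = 0 :=
        (Submodule.mem_orthogonal I B).mp hB _ (hIinv A C hC)
      linarith
    have hBv : ∀ v : V, (B : Module.End ℝ V) v = 0 := by
      intro v
      have hmem : f ((B : Module.End ℝ V) v) = 0 := by
        apply hbot
        · exact ⟨_, rfl⟩
        · rw [hfe B v]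
          have : (⁅B, f v⁆ : h) = -⁅f v, B⁆ := by rw [← lie_skew]
          rw [this]
          exact Submodule.neg_mem _ (hJinv (f v))
      have : f ((B : Module.End ℝ V) v) = f 0 := by rw [hmem, map_zero]
      exact hinj this
    have : (B : Module.End ℝ V) = 0 := by ext v; exact hBv v
    exact Subtype.ext this
  haveI : CompleteSpace I := FiniteDimensional.complete ℝ I
  have hItop : I = ⊤ := Submodule.orthogonal_eq_bot_iff.mp hJ
  have hsurj : Function.Surjective f := LinearMap.range_eq_top.mp hItop
  -- the equivalence
  let e : V ≃ₗ[ℝ] h := LinearEquiv.ofBijective f ⟨hinj, hsurj⟩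
  have he : ∀ (A : h) (v : V), e ((A : Module.End ℝ V) v) = ⁅A, e v⁆ := hfe
  constructor
  · constructor
    · intro K
      have hW := hirr ((K : Submodule ℝ h).comap f) ?_
      · rcases hW with hW | hW
        · left
          have : (K : Submodule ℝ h) = ⊥ := by
            rw [Submodule.eq_bot_iff]
            intro x hx
            obtain ⟨v, rfl⟩ := hsurj x
            have : v ∈ (K : Submodule ℝ h).comap f := hx
            rw [hW] at this
            simp only [Submodule.mem_bot] at this
            rw [this, map_zero]
          exact (LieSubmodule.toSubmodule_inj _ _).mp (by simpa using this)
        · right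
          have : (K : Submodule ℝ h) = ⊤ := by
            rw [Submodule.eq_top_iff']
            intro x
            obtain ⟨v, rfl⟩ := hsurj x
            have hv : v ∈ (K : Submodule ℝ h).comap f := by rw [hW]; trivial
            exact hv
          exact (LieSubmodule.toSubmodule_inj _ _).mp (by simpa using this)
      · intro A hA w hw
        simp only [Submodule.mem_comap] at hw ⊢
        rw [hfe ⟨A, hA⟩ w]
        exact K.lie_mem hw
    · intro habel
      apply hf0
      ext v
      obtain ⟨w, hw⟩ := hsurj (f v)
      have hzero : ∀ (A : h) (u : V), f ((A : Module.End ℝ V) u) = 0 := by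
        intro A u
        rw [hfe A u, trivial_lie_zero]
      have : ∀ A : h, (A : Module.End ℝ V) = 0 := by
        intro A
        ext u
        have : f ((A : Module.End ℝ V) u) = f 0 := by rw [hzero, map_zero]
        exact hinj this
      have hfv : f v = 0 := Subtype.ext (by rw [this (f v)]; rfl)
      simp [hfv]
  · exact ⟨e, he⟩
end

section
/- Let h be a finite-dimensional simple real Lie algebra whose Killing form B is negative definite. Then every linear map f : h → h that commutes with the adjoint action, i.e. f([x,y]) = [x, f(y)] for all x,y ∈ h, is a scalar multiple of the identity. Consequently, every h-equivariant linear map τ : h → End(h) taking values in ad(h) (equivariance meaning τ([x,y]) = [ad(x), τ(y)] for all x,y) is of the form τ(x) = c·ad(x) for some real constant c; equivalently, the associated trilinear form (x,y,z) ↦ B(τ(x)(y), z) is a real multiple of the canonical 3-form (x,y,z) ↦ B([x,y], z). -/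
open LieAlgebra Polynomial
set_option linter.unusedSectionVars false
section
variable {L : Type*} [LieRing L] [LieAlgebra ℝ L] [Module.Finite ℝ L]

lemma comm_mem_centralizer (g : Module.End ℝ L)
    (hg : ∀ x y : L, g ⁅x, y⁆ = ⁅x, g y⁆) :
    g ∈ Subalgebra.centralizer ℝ (Set.range fun x => (LieAlgebra.ad ℝ L x : Module.End ℝ L)) := by
  rw [Subalgebra.mem_centralizer_iff]
  rintro - ⟨x, rfl⟩
  ext y
  simp [Module.End.mul_apply, ad_apply, hg]

lemma centralizer_comm (g : Module.End ℝ L)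
    (hg : g ∈ Subalgebra.centralizer ℝ (Set.range fun x => (LieAlgebra.ad ℝ L x : Module.End ℝ L)))
    (x y : L) : g ⁅x, y⁆ = ⁅x, g y⁆ := by
  rw [Subalgebra.mem_centralizer_iff] at hg
  have := hg _ ⟨x, rfl⟩
  have h2 := DFunLike.congr_fun this y
  simpa [Module.End.mul_apply, ad_apply] using h2.symm

lemma comm_injective (hs : LieAlgebra.IsSimple ℝ L) (g : Module.End ℝ L)
    (hg : ∀ x y : L, g ⁅x, y⁆ = ⁅x, g y⁆) (hg0 : g ≠ 0) : Function.Injective g := by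
  let I : LieIdeal ℝ L :=
    { LinearMap.ker g with
      lie_mem := fun {x m} hm => by
        have hm' : g m = 0 := hm
        show g ⁅x, m⁆ = 0
        rw [hg x m, hm', lie_zero] }
  have memI : ∀ m, m ∈ I ↔ g m = 0 := fun m => Iff.rfl
  rcases hs.eq_bot_or_eq_top I with h | h
  · intro a b hab
    have : a - b ∈ I := by
      rw [memI, map_sub, hab, sub_self]
    rw [h, LieSubmodule.mem_bot] at this
    exact sub_eq_zero.mp this
  · exfalso
    apply hg0
    ext m
    have : m ∈ I := by rw [h]; trivial
    exact (memI m).mp this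

lemma nontrivial_of_simple (hs : LieAlgebra.IsSimple ℝ L) : Nontrivial L := by
  by_contra h
  rw [not_nontrivial_iff_subsingleton] at h
  exact hs.non_abelian ⟨fun x m => Subsingleton.elim _ _⟩

-- square is a nonnegative scalar => g is scalar
lemma comm_sq_nonneg_scalar (hs : LieAlgebra.IsSimple ℝ L) (g : Module.End ℝ L)
    (hg : ∀ x y : L, g ⁅x, y⁆ = ⁅x, g y⁆) {k : ℝ} (hk : 0 ≤ k)
    (hsq : g * g = k • 1) : ∃ c : ℝ, g = c • 1 := by
  set r := Real.sqrt k with hr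
  have hr2 : r * r = k := Real.mul_self_sqrt hk
  have hfact : (g + r • 1) * (g - r • 1) = 0 := by
    have : (g + r • 1) * (g - r • 1) = g * g - (r * r) • 1 := by
      have h1 : g * (r • (1 : Module.End ℝ L)) = r • g := by rw [mul_smul_comm, mul_one]
      have h2 : (r • (1 : Module.End ℝ L)) * g = r • g := by rw [smul_mul_assoc, one_mul]
      have h3 : (r • (1 : Module.End ℝ L)) * (r • 1) = (r * r) • 1 := by
        rw [smul_mul_assoc, mul_smul_comm, smul_smul, mul_one]
      rw [add_mul, mul_sub, mul_sub, h1, h2, h3]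
      abel
    rw [this, hsq, hr2, sub_self]
  rcases eq_or_ne (g + r • 1) 0 with h0 | h0
  · refine ⟨-r, ?_⟩
    have := eq_neg_of_add_eq_zero_left h0
    rw [this, neg_smul]
  · have hcomm : ∀ x y : L, (g + r • 1) ⁅x, y⁆ = ⁅x, (g + r • 1) y⁆ := by
      intro x y
      simp [LinearMap.add_apply, LinearMap.smul_apply, hg, lie_add, lie_smul]
    have hinj := comm_injective hs _ hcomm h0
    refine ⟨r, ?_⟩
    have : ∀ v, (g - r • 1) v = 0 := by
      intro v
      apply hinj
      have := DFunLike.congr_fun hfact v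
      simpa [Module.End.mul_apply] using this
    ext v
    have := this v
    simpa [LinearMap.sub_apply, sub_eq_zero] using this

-- Killing form identity for commuting g
lemma killing_comm_sq (g : Module.End ℝ L)
    (hg : ∀ x y : L, g ⁅x, y⁆ = ⁅x, g y⁆) {k : ℝ} (hsq : g * g = k • 1) (x : L) :
    killingForm ℝ L (g x) (g x) = k * killingForm ℝ L x x := by
  have had : (LieAlgebra.ad ℝ L (g x) : Module.End ℝ L) = g * LieAlgebra.ad ℝ L x := by
    ext y
    have : g ⁅x, y⁆ = ⁅g x, y⁆ :=
      calc g ⁅x, y⁆ = g (-⁅y, x⁆) := by rw [lie_skew]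
        _ = -g ⁅y, x⁆ := map_neg g _
        _ = -⁅y, g x⁆ := by rw [hg y x]
        _ = ⁅g x, y⁆ := lie_skew _ _
    simp [ad_apply, Module.End.mul_apply, ← this, hg]
  have hcomm : (LieAlgebra.ad ℝ L x : Module.End ℝ L) * g = g * LieAlgebra.ad ℝ L x := by
    ext y
    simp [ad_apply, Module.End.mul_apply, hg]
  rw [killingForm_apply_apply, killingForm_apply_apply]
  have : (LieAlgebra.ad ℝ L (g x) : Module.End ℝ L) ∘ₗ LieAlgebra.ad ℝ L (g x)
      = k • ((LieAlgebra.ad ℝ L x : Module.End ℝ L) ∘ₗ LieAlgebra.ad ℝ L x) := by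
    have h1 : (LieAlgebra.ad ℝ L (g x) : Module.End ℝ L) * LieAlgebra.ad ℝ L (g x)
        = (g * g) * (LieAlgebra.ad ℝ L x * LieAlgebra.ad ℝ L x) := by
      rw [had]
      calc (g * LieAlgebra.ad ℝ L x) * (g * LieAlgebra.ad ℝ L x)
          = g * ((LieAlgebra.ad ℝ L x * g) * LieAlgebra.ad ℝ L x) := by noncomm_ring
        _ = g * ((g * LieAlgebra.ad ℝ L x) * LieAlgebra.ad ℝ L x) := by rw [hcomm]
        _ = (g * g) * (LieAlgebra.ad ℝ L x * LieAlgebra.ad ℝ L x) := by noncomm_ring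
    have h2 : ((g * g) * (LieAlgebra.ad ℝ L x * LieAlgebra.ad ℝ L x) : Module.End ℝ L)
        = k • ((LieAlgebra.ad ℝ L x : Module.End ℝ L) * LieAlgebra.ad ℝ L x) := by
      rw [hsq, smul_mul_assoc, one_mul]
    exact h1.trans h2
  have hco : (LieAlgebra.ad ℝ L (g x) : Module.End ℝ L) ∘ₗ LieAlgebra.ad ℝ L (g x)
      = k • ((LieAlgebra.ad ℝ L x : Module.End ℝ L) ∘ₗ LieAlgebra.ad ℝ L x) := this
  rw [hco, map_smul, smul_eq_mul]

lemma comm_sq_neg_false (hs : LieAlgebra.IsSimple ℝ L)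
    (hneg : ∀ x : L, x ≠ 0 → killingForm ℝ L x x < 0) (g : Module.End ℝ L)
    (hg : ∀ x y : L, g ⁅x, y⁆ = ⁅x, g y⁆) {k : ℝ} (hk : k < 0)
    (hsq : g * g = k • 1) : False := by
  have := nontrivial_of_simple hs
  obtain ⟨x, hx⟩ := exists_ne (0 : L)
  have hg0 : g ≠ 0 := by
    intro h
    have := DFunLike.congr_fun hsq x
    rw [h] at this
    simp only [Module.End.mul_apply, LinearMap.zero_apply, LinearMap.smul_apply,
      Module.End.one_apply] at this
    rcases smul_eq_zero.mp this.symm with h' | h'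
    · exact absurd h' (ne_of_lt hk)
    · exact hx h'
  have hinj := comm_injective hs g hg hg0
  have hgx : g x ≠ 0 := fun h => hx (hinj (by simpa using h))
  have h1 := hneg (g x) hgx
  have h2 := killing_comm_sq g hg hsq x
  have h3 := hneg x hx
  nlinarith

lemma comm_is_scalar (hs : LieAlgebra.IsSimple ℝ L)
    (hneg : ∀ x : L, x ≠ 0 → killingForm ℝ L x x < 0) (f : Module.End ℝ L)
    (hf : ∀ x y : L, f ⁅x, y⁆ = ⁅x, f y⁆) : ∃ c : ℝ, f = c • (1 : Module.End ℝ L) := by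
  haveI : Nontrivial L := nontrivial_of_simple hs
  have hone : (1 : Module.End ℝ L) ≠ 0 := by
    obtain ⟨x, hx⟩ := exists_ne (0 : L)
    intro h
    exact hx (by simpa using DFunLike.congr_fun h x)
  set S := Algebra.adjoin ℝ {f} with hS
  have hmemf : f ∈ S := Algebra.self_mem_adjoin_singleton ℝ f
  have hSle : S ≤ Subalgebra.centralizer ℝ
      (Set.range fun x => (LieAlgebra.ad ℝ L x : Module.End ℝ L)) :=
    Algebra.adjoin_le (Set.singleton_subset_iff.mpr (comm_mem_centralizer f hf))
  have hScomm : ∀ g ∈ S, ∀ x y : L, g ⁅x, y⁆ = ⁅x, g y⁆ :=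
    fun g hg => centralizer_comm g (hSle hg)
  haveI : Nontrivial S := by
    refine ⟨1, 0, fun h => hone ?_⟩
    exact congrArg Subtype.val h
  haveI : NoZeroDivisors S := by
    constructor
    intro a b hab
    rcases eq_or_ne a 0 with h | h
    · exact Or.inl h
    · right
      have ha0 : (a : Module.End ℝ L) ≠ 0 := fun h' => h (Subtype.ext h')
      have hinj := comm_injective hs (a : Module.End ℝ L) (hScomm _ a.2) ha0
      have : (a : Module.End ℝ L) * (b : Module.End ℝ L) = 0 := by
        exact_mod_cast congrArg Subtype.val hab
      ext v
      have := DFunLike.congr_fun this v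
      simp only [Module.End.mul_apply, LinearMap.zero_apply] at this
      exact hinj (by simpa using this)
  haveI : IsDomain S := NoZeroDivisors.to_isDomain _
  have fS : S := ⟨f, hmemf⟩
  have hint : IsIntegral ℝ (⟨f, hmemf⟩ : S) := IsIntegral.of_finite ℝ _
  set p := minpoly ℝ (⟨f, hmemf⟩ : S) with hp
  have hirr : Irreducible p := minpoly.irreducible hint
  have hdeg2 : p.natDegree ≤ 2 := hirr.natDegree_le_two
  have hdegpos : 0 < p.natDegree := minpoly.natDegree_pos hint
  have hmonic : p.Monic := minpoly.monic hint
  have haev : aeval f p = 0 := by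
    have h0 := minpoly.aeval ℝ (⟨f, hmemf⟩ : S)
    have := congrArg (Subtype.val : S → Module.End ℝ L) h0
    rw [← hp] at this
    simpa [Polynomial.aeval_subalgebra_coe] using this
  rcases (by omega : p.natDegree = 1 ∨ p.natDegree = 2) with hd | hd
  · -- degree one
    have hpeq : p = X + C (p.coeff 0) := hmonic.eq_X_add_C hd
    rw [hpeq] at haev
    simp only [map_add, aeval_X, aeval_C, Algebra.algebraMap_eq_smul_one] at haev
    refine ⟨-(p.coeff 0), ?_⟩
    rw [neg_smul]
    exact eq_neg_of_add_eq_zero_left haev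
  · -- degree two
    set b := p.coeff 1 with hb
    set e := p.coeff 0 with he
    have hsum := Polynomial.aeval_eq_sum_range (R := ℝ) (S := Module.End ℝ L) (x := f) (p := p)
    rw [hd, haev] at hsum
    have hc2 : p.coeff 2 = 1 := by
      have := hmonic.coeff_natDegree
      rwa [hd] at this
    have hrel : f * f = (-b) • f + (-e) • (1 : Module.End ℝ L) := by
      have hexp : e • (1 : Module.End ℝ L) + b • f + f * f = 0 := by
        rw [hsum]
        rw [Finset.sum_range_succ, Finset.sum_range_succ, Finset.sum_range_succ,
          Finset.sum_range_zero, hc2]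
        simp only [pow_zero, pow_one, pow_two, one_smul, zero_add, ← hb, ← he]
      have h := eq_neg_of_add_eq_zero_right hexp
      rw [h]
      module
    set g : Module.End ℝ L := (2 : ℝ) • f + b • 1 with hgdef
    have hgcomm : ∀ x y : L, g ⁅x, y⁆ = ⁅x, g y⁆ := by
      intro x y
      simp [hgdef, LinearMap.add_apply, LinearMap.smul_apply, hf, lie_add, lie_smul]
    have hgg : g * g = (b * b - 4 * e) • (1 : Module.End ℝ L) := by
      have h1 : g * g = (4 : ℝ) • (f * f) + (4 * b) • f + (b * b) • 1 := by
        rw [hgdef]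
        have e1 : ((2:ℝ) • f + b • 1) * ((2:ℝ) • f + b • 1)
            = (2:ℝ) • ((2:ℝ) • (f * f)) + (2:ℝ) • (b • (f * 1))
              + (b • ((2:ℝ) • (1 * f)) + b • (b • ((1 : Module.End ℝ L) * 1))) := by
          rw [add_mul, mul_add, mul_add, smul_mul_assoc, smul_mul_assoc, smul_mul_assoc,
            smul_mul_assoc, mul_smul_comm, mul_smul_comm, mul_smul_comm, mul_smul_comm]
        rw [e1, mul_one, one_mul, mul_one]
        module
      rw [h1, hrel]
      module
    rcases le_or_gt 0 (b * b - 4 * e) with hk | hk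
    · obtain ⟨c, hc⟩ := comm_sq_nonneg_scalar hs g hgcomm hk hgg
      refine ⟨(c - b) / 2, ?_⟩
      have h2 : (2 : ℝ) • f = (c - b) • (1 : Module.End ℝ L) := by
        have := hc
        rw [hgdef] at this
        have h3 : (2 : ℝ) • f = c • (1 : Module.End ℝ L) - b • 1 := eq_sub_of_add_eq this
        rw [h3]
        module
      have := congrArg (fun h : Module.End ℝ L => ((2:ℝ)⁻¹) • h) h2
      simp only [smul_smul] at this
      norm_num at this
      rw [this]
      ext v
      simp [div_eq_mul_inv, mul_comm]
    · exact absurd (comm_sq_neg_false hs hneg g hgcomm hk hgg) not_false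
end

/-- Let `h` be a finite-dimensional simple real Lie algebra with negative
definite Killing form `B`.  Then every linear map `f : h → h` commuting with the adjoint
action is a scalar multiple of the identity; consequently every equivariant linear map
`τ : h → End(h)` with values in `ad(h)` is of the form `τ(x) = c • ad(x)`, and the
associated trilinear form `(x,y,z) ↦ B(τ(x)(y), z)` is the same multiple `c` of the
canonical 3-form `(x,y,z) ↦ B([x,y], z)`. -/
theorem equivariant_maps_of_compact_simple
    {L : Type*} [LieRing L] [LieAlgebra ℝ L] [Module.Finite ℝ L]
    (hsimple : LieAlgebra.IsSimple ℝ L)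
    (hneg : ∀ x : L, x ≠ 0 → killingForm ℝ L x x < 0) :
    (∀ f : L →ₗ[ℝ] L, (∀ x y : L, f ⁅x, y⁆ = ⁅x, f y⁆) →
      ∃ c : ℝ, f = c • LinearMap.id) ∧
    (∀ τ : L →ₗ[ℝ] Module.End ℝ L,
      (∀ x : L, ∃ y : L, τ x = LieAlgebra.ad ℝ L y) →
      (∀ x y : L, τ ⁅x, y⁆ = ⁅LieAlgebra.ad ℝ L x, τ y⁆) →
      ∃ c : ℝ, (∀ x : L, τ x = c • LieAlgebra.ad ℝ L x) ∧
        ∀ x y z : L, killingForm ℝ L (τ x y) z = c * killingForm ℝ L ⁅x, y⁆ z) := by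
  have part1 : ∀ f : L →ₗ[ℝ] L, (∀ x y : L, f ⁅x, y⁆ = ⁅x, f y⁆) →
      ∃ c : ℝ, f = c • LinearMap.id := by
    intro f hf
    obtain ⟨c, hc⟩ := comm_is_scalar hsimple hneg f hf
    exact ⟨c, hc⟩
  refine ⟨part1, ?_⟩
  intro τ hτval hτequiv
  have hcenter : LieAlgebra.center ℝ L = ⊥ := by
    rcases hsimple.eq_bot_or_eq_top (LieAlgebra.center ℝ L) with h | h
    · exact h
    · exact absurd ((LieAlgebra.isLieAbelian_iff_center_eq_top ℝ L).mpr h) hsimple.non_abelian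
  set A : L →ₗ[ℝ] Module.End ℝ L := (LieAlgebra.ad ℝ L : L →ₗ[ℝ] Module.End ℝ L) with hAdef
  have hAad : ∀ x, A x = LieAlgebra.ad ℝ L x := fun x => rfl
  have hAinj : Function.Injective A := by
    intro a b hab
    have hmem : a - b ∈ LieAlgebra.center ℝ L := by
      rw [LieAlgebra.center, LieModule.mem_maxTrivSubmodule]
      intro y
      have h0 : LieAlgebra.ad ℝ L (a - b) = 0 := by
        have : A (a - b) = 0 := by rw [map_sub, hab, sub_self]
        exact this
      have := DFunLike.congr_fun h0 y
      rw [LieAlgebra.ad_apply] at this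
      rw [← lie_skew, this]
      simp
    rw [hcenter, LieSubmodule.mem_bot] at hmem
    exact sub_eq_zero.mp hmem
  have hmem : ∀ x, τ x ∈ LinearMap.range A := by
    intro x
    obtain ⟨y, hy⟩ := hτval x
    exact ⟨y, hy.symm⟩
  set eA := LinearEquiv.ofInjective A hAinj with heA
  set τ' : L →ₗ[ℝ] LinearMap.range A := τ.codRestrict _ hmem with hτ'
  set f : L →ₗ[ℝ] L := eA.symm.toLinearMap ∘ₗ τ' with hfdef
  have hAf : ∀ x, A (f x) = τ x := by
    intro x
    have h2 : eA (f x) = τ' x := by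
      rw [hfdef]
      simp only [LinearMap.coe_comp, Function.comp_apply, LinearEquiv.coe_toLinearMap]
      exact eA.apply_symm_apply _
    calc A (f x) = ↑(eA (f x)) := rfl
      _ = ↑(τ' x) := by rw [h2]
      _ = τ x := rfl
  have hfcomm : ∀ x y : L, f ⁅x, y⁆ = ⁅x, f y⁆ := by
    intro x y
    apply hAinj
    rw [hAf, hτequiv x y, ← hAf y, hAad, hAad]
    simp
  obtain ⟨c, hc⟩ := part1 f hfcomm
  refine ⟨c, ?_, ?_⟩
  · intro x
    rw [← hAf x, hc]
    simp only [LinearMap.smul_apply, LinearMap.id_apply, map_smul, hAad]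
  · intro x y z
    have hτxy : τ x y = c • ⁅x, y⁆ := by
      rw [← hAf x, hc]
      simp only [LinearMap.smul_apply, LinearMap.id_apply, map_smul, hAad,
        LieAlgebra.ad_apply]
    rw [hτxy, map_smul]
    simp [smul_eq_mul]
end

section
/- Let T = T₁ ⊕ T₂ be a direct sum of finite-dimensional real vector spaces, let k ≥ 3, and let τ = τ₁ + τ₂ ∈ ΛᵏT, where τᵢ ∈ ΛᵏTᵢ ⊆ ΛᵏT for i = 1, 2. Then for every endomorphism A of T, the derivation action satisfies A·τ = 0 if and only if A·τ₁ = 0 and A·τ₂ = 0; that is, the stabilizer of τ in gl(T) is the intersection of the stabilizers of τ₁ and τ₂. -/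
open ExteriorAlgebra

section Aux

variable {T : Type*} [AddCommGroup T] [Module ℝ T]
  {k : ℕ} {A : Module.End ℝ T} {D : Module.End ℝ (ExteriorAlgebra ℝ T)}
  {S : Submodule ℝ T}

theorem keyC
    (hD : ∀ v : Fin k → T,
      D (ExteriorAlgebra.ιMulti ℝ k v)
        = ∑ j, ExteriorAlgebra.ιMulti ℝ k (Function.update v j (A (v j))))
    (hk : 2 ≤ k) (q : T →ₗ[ℝ] T) (hq : ∀ x ∈ S, q x = 0)
    {x : ExteriorAlgebra ℝ T}
    (hx : x ∈ Submodule.span ℝ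
      {x : ExteriorAlgebra ℝ T | ∃ v : Fin k → T, (∀ j, v j ∈ S) ∧ ExteriorAlgebra.ιMulti ℝ k v = x}) :
    ExteriorAlgebra.map q (D x) = 0 := by
  induction hx using Submodule.span_induction with
  | mem x hx =>
    obtain ⟨v, hv, rfl⟩ := hx
    rw [hD, map_sum]
    refine Finset.sum_eq_zero fun j _ => ?_
    rw [ExteriorAlgebra.map_apply_ιMulti]
    haveI : Nontrivial (Fin k) := Fin.nontrivial_iff_two_le.2 hk
    obtain ⟨i, hi⟩ := exists_ne j
    refine MultilinearMap.map_coord_zero _ i ?_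
    simp only [Function.comp_apply, Function.update_of_ne hi, hq _ (hv i)]
  | zero => simp
  | add x y _ _ hx hy => rw [map_add, map_add, hx, hy, add_zero]
  | smul c x _ hx => rw [map_smul, map_smul, hx, smul_zero]

theorem keyA
    (hD : ∀ v : Fin k → T,
      D (ExteriorAlgebra.ιMulti ℝ k v)
        = ∑ j, ExteriorAlgebra.ιMulti ℝ k (Function.update v j (A (v j))))
    (t : ℝ) (p q : T →ₗ[ℝ] T) (hp : ∀ x ∈ S, p x = x) (hq : ∀ x ∈ S, q x = 0)
    (hpq : ∀ x, p x + q x = x)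
    {x : ExteriorAlgebra ℝ T}
    (hx : x ∈ Submodule.span ℝ
      {x : ExteriorAlgebra ℝ T | ∃ v : Fin k → T, (∀ j, v j ∈ S) ∧ ExteriorAlgebra.ιMulti ℝ k v = x}) :
    ExteriorAlgebra.map (p + t • q) (D x)
      = (1 - t) • ExteriorAlgebra.map p (D x) + t • D x := by
  induction hx using Submodule.span_induction with
  | mem x hx =>
    obtain ⟨v, hv, rfl⟩ := hx
    rw [hD, map_sum, map_sum, Finset.smul_sum, Finset.smul_sum, ← Finset.sum_add_distrib]
    refine Finset.sum_congr rfl fun j _ => ?_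
    have hcomp1 : (p + t • q) ∘ Function.update v j (A (v j))
        = Function.update v j (p (A (v j)) + t • q (A (v j))) := by
      funext i
      rcases eq_or_ne i j with rfl | hij
      · simp
      · simp only [Function.comp_apply, Function.update_of_ne hij, LinearMap.add_apply,
          LinearMap.smul_apply, hp _ (hv i), hq _ (hv i), smul_zero, add_zero]
    have hcomp2 : p ∘ Function.update v j (A (v j))
        = Function.update v j (p (A (v j))) := by
      funext i
      rcases eq_or_ne i j with rfl | hij
      · simp
      · simp only [Function.comp_apply, Function.update_of_ne hij, hp _ (hv i)]
    have hsplit : Function.update v j (A (v j))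
        = Function.update v j (p (A (v j)) + q (A (v j))) := by rw [hpq]
    rw [ExteriorAlgebra.map_apply_ιMulti, ExteriorAlgebra.map_apply_ιMulti, hcomp1, hcomp2,
      hsplit, AlternatingMap.map_update_add, AlternatingMap.map_update_add,
      AlternatingMap.map_update_smul]
    module
  | zero => simp
  | add x y _ _ hx hy =>
    rw [map_add, map_add, map_add, hx, hy]; module
  | smul c x _ hx =>
    rw [map_smul, map_smul, map_smul, hx]; module

theorem keyB
    (hD : ∀ v : Fin k → T,
      D (ExteriorAlgebra.ιMulti ℝ k v)
        = ∑ j, ExteriorAlgebra.ιMulti ℝ k (Function.update v j (A (v j))))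
    (hk : 1 ≤ k)
    (t : ℝ) (p q : T →ₗ[ℝ] T) (hp : ∀ x ∈ S, p x = x) (hq : ∀ x ∈ S, q x = 0)
    (hpq : ∀ x, p x + q x = x)
    {x : ExteriorAlgebra ℝ T}
    (hx : x ∈ Submodule.span ℝ
      {x : ExteriorAlgebra ℝ T | ∃ v : Fin k → T, (∀ j, v j ∈ S) ∧ ExteriorAlgebra.ιMulti ℝ k v = x}) :
    ExteriorAlgebra.map (q + t • p) (D x)
      = t ^ (k-1) • (D x - ExteriorAlgebra.map p (D x)) + t ^ k • ExteriorAlgebra.map p (D x) := by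
  induction hx using Submodule.span_induction with
  | mem x hx =>
    obtain ⟨v, hv, rfl⟩ := hx
    rw [hD, map_sum, map_sum, ← Finset.sum_sub_distrib, Finset.smul_sum, Finset.smul_sum,
      ← Finset.sum_add_distrib]
    refine Finset.sum_congr rfl fun j _ => ?_
    have hcomp1 : (q + t • p) ∘ Function.update v j (A (v j))
        = fun i => (if i = j then (1:ℝ) else t) •
            Function.update v j (q (A (v j)) + t • p (A (v j))) i := by
      funext i
      rcases eq_or_ne i j with rfl | hij
      · simp
      · simp only [Function.comp_apply, Function.update_of_ne hij, LinearMap.add_apply,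
          LinearMap.smul_apply, hp _ (hv i), hq _ (hv i), if_neg hij, zero_add]
    have hcomp2 : p ∘ Function.update v j (A (v j))
        = Function.update v j (p (A (v j))) := by
      funext i
      rcases eq_or_ne i j with rfl | hij
      · simp
      · simp only [Function.comp_apply, Function.update_of_ne hij, hp _ (hv i)]
    have hprod : (∏ i : Fin k, (if i = j then (1:ℝ) else t)) = t ^ (k - 1) := by
      have : (fun i : Fin k => (if i = j then (1:ℝ) else t))
          = Function.update (fun _ : Fin k => t) j 1 := by
        funext i; rcases eq_or_ne i j with rfl | hij <;> simp [Function.update_of_ne, *]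
      rw [this, Finset.prod_update_of_mem (Finset.mem_univ j), one_mul, Finset.prod_const,
        Finset.sdiff_singleton_eq_erase, Finset.card_erase_of_mem (Finset.mem_univ j), Finset.card_univ, Fintype.card_fin]
    have hsplit : Function.update v j (A (v j))
        = Function.update v j (q (A (v j)) + p (A (v j))) := by
      rw [show q (A (v j)) + p (A (v j)) = A (v j) by rw [add_comm]; exact hpq _]
    rw [ExteriorAlgebra.map_apply_ιMulti, ExteriorAlgebra.map_apply_ιMulti, hcomp1, hcomp2]
    rw [show ((ExteriorAlgebra.ιMulti ℝ k) fun i => (if i = j then (1:ℝ) else t) •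
          Function.update v j (q (A (v j)) + t • p (A (v j))) i)
        = (∏ i : Fin k, (if i = j then (1:ℝ) else t)) •
          (ExteriorAlgebra.ιMulti ℝ k) (Function.update v j (q (A (v j)) + t • p (A (v j)))) from
      MultilinearMap.map_smul_univ _ _ _]
    rw [hprod, AlternatingMap.map_update_add, AlternatingMap.map_update_smul, hsplit,
      AlternatingMap.map_update_add]
    have hpow : t ^ (k - 1) * t = t ^ k := by
      rw [← pow_succ, Nat.sub_add_cancel hk]
    rw [smul_add, smul_smul, hpow]
    module
  | zero => simp
  | add x y _ _ hx hy =>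
    rw [map_add, map_add, map_add, hx, hy]; module
  | smul c x _ hx =>
    rw [map_smul, map_smul, map_smul, hx]; module

end Aux

/-- Let `T = T₁ ⊕ T₂` be a direct sum of finite-dimensional real vector
spaces, `k ≥ 3`, and `τ = τ₁ + τ₂ ∈ ΛᵏT` with `τᵢ ∈ ΛᵏTᵢ ⊆ ΛᵏT`.  For every endomorphism
`A` of `T`, the derivation action (any linear map `D` acting on wedges of `k` vectors by
`D(v₁∧…∧v_k) = Σⱼ v₁∧…∧Avⱼ∧…∧v_k`) satisfies `A·τ = 0 ↔ (A·τ₁ = 0 ∧ A·τ₂ = 0)`. -/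
theorem stabilizer_of_decomposable_form
    {T : Type*} [AddCommGroup T] [Module ℝ T] [FiniteDimensional ℝ T]
    (T1 T2 : Submodule ℝ T) (hcompl : IsCompl T1 T2)
    (k : ℕ) (hk : 3 ≤ k)
    (τ1 τ2 : ExteriorAlgebra ℝ T)
    (h1 : τ1 ∈ Submodule.span ℝ
      {x : ExteriorAlgebra ℝ T | ∃ v : Fin k → T, (∀ j, v j ∈ T1) ∧ ExteriorAlgebra.ιMulti ℝ k v = x})
    (h2 : τ2 ∈ Submodule.span ℝ
      {x : ExteriorAlgebra ℝ T | ∃ v : Fin k → T, (∀ j, v j ∈ T2) ∧ ExteriorAlgebra.ιMulti ℝ k v = x})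
    (A : Module.End ℝ T)
    (D : Module.End ℝ (ExteriorAlgebra ℝ T))
    (hD : ∀ v : Fin k → T,
      D (ExteriorAlgebra.ιMulti ℝ k v)
        = ∑ j, ExteriorAlgebra.ιMulti ℝ k (Function.update v j (A (v j)))) :
    D (τ1 + τ2) = 0 ↔ (D τ1 = 0 ∧ D τ2 = 0) := by
  constructor
  · intro h0
    set p1 : T →ₗ[ℝ] T := T1.subtype ∘ₗ T1.projectionOnto T2 hcompl with hp1def
    set p2 : T →ₗ[ℝ] T := T2.subtype ∘ₗ T2.projectionOnto T1 hcompl.symm with hp2def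
    have hp1 : ∀ x ∈ T1, p1 x = x := fun x hx => by
      simpa [hp1def] using
        congrArg (Subtype.val) (Submodule.projectionOnto_apply_left hcompl ⟨x, hx⟩)
    have hp2 : ∀ x ∈ T2, p2 x = x := fun x hx => by
      simpa [hp2def] using
        congrArg (Subtype.val) (Submodule.projectionOnto_apply_left hcompl.symm ⟨x, hx⟩)
    have hp1z : ∀ x ∈ T2, p1 x = 0 := fun x hx => by
      simpa [hp1def] using
        congrArg (Subtype.val) (Submodule.projectionOnto_apply_right hcompl ⟨x, hx⟩)
    have hp2z : ∀ x ∈ T1, p2 x = 0 := fun x hx => by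
      simpa [hp2def] using
        congrArg (Subtype.val) (Submodule.projectionOnto_apply_right hcompl.symm ⟨x, hx⟩)
    have hpsum : ∀ x, p1 x + p2 x = x := fun x =>
      Submodule.projection_add_projection_eq_self hcompl x
    have hsum : D τ1 + D τ2 = 0 := by rw [← map_add]; exact h0
    have hC1 : ExteriorAlgebra.map p2 (D τ1) = 0 := keyC hD (by omega) p2 hp2z h1
    have hC2 : ExteriorAlgebra.map p1 (D τ2) = 0 := keyC hD (by omega) p1 hp1z h2
    have ha : ExteriorAlgebra.map p1 (D τ1) = 0 := by
      have := congrArg (ExteriorAlgebra.map p1) hsum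
      rwa [map_add, hC2, add_zero, map_zero] at this
    have hd : ExteriorAlgebra.map p2 (D τ2) = 0 := by
      have := congrArg (ExteriorAlgebra.map p2) hsum
      rwa [map_add, hC1, zero_add, map_zero] at this
    have hA := keyA hD 2 p1 p2 hp1 hp2z hpsum h1
    have hB := keyB hD (by omega) 2 p2 p1 hp2 hp1z
      (fun x => by rw [add_comm]; exact hpsum x) h2
    have h2sum := congrArg (ExteriorAlgebra.map (p1 + (2:ℝ) • p2)) hsum
    rw [map_add, hA, hB, map_zero, ha, hd, smul_zero, smul_zero, sub_zero, zero_add,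
      add_zero] at h2sum
    -- h2sum : 2 • D τ1 + 2^(k-1) • D τ2 = 0
    have hneg : D τ2 = -D τ1 := eq_neg_of_add_eq_zero_right hsum
    rw [hneg, smul_neg, ← sub_eq_add_neg, ← sub_smul] at h2sum
    have hne : (2:ℝ) - 2 ^ (k - 1) ≠ 0 := by
      have h4 : (2:ℝ) ^ 2 ≤ 2 ^ (k - 1) := by
        apply pow_le_pow_right₀ one_le_two
        omega
      norm_num at h4 ⊢
      nlinarith
    have hz1 : D τ1 = 0 := by
      rcases smul_eq_zero.mp h2sum with h | h
      · exact absurd h hne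
      · exact h
    exact ⟨hz1, by rw [hneg, hz1, neg_zero]⟩
  · rintro ⟨ha, hb⟩
    rw [map_add, ha, hb, add_zero]
end

section
/- Fix an integer n ≥ 2 and real numbers α ≠ 0 and γ. Let V = ℍⁿ ⊕ Im ℍ with the real inner product given by ⟨x,y⟩ = Re Σₘ xₘ ȳₘ on ℍⁿ and ⟨p,q⟩ = Re(p q̄) on the imaginary quaternions Im ℍ. Let ξ₁, ξ₂, ξ₃ = i, j, k ∈ Im ℍ, and for l = 1,2,3 let ω_l be the alternating 2-form on ℍⁿ given by ω_l(x,y) = ⟨x·e_l, y⟩ (right quaternion multiplication by e₁ = i, e₂ = j, e₃ = k). Define the alternating 3-form on V: τ^γ = (α/2) Σ_{l=1}^{3} ξ_l♭ ∧ ω_l + (γ/2) ξ₁♭ ∧ ξ₂♭ ∧ ξ₃♭, where ξ♭ denotes the 1-form ⟨ξ,·⟩ and (ξ♭∧ω)(X,Y,Z) = ⟨ξ,X⟩ω(Y,Z) − ⟨ξ,Y⟩ω(X,Z) + ⟨ξ,Z⟩ω(X,Y). Then a skew-adjoint endomorphism A of V satisfies A·τ^γ = 0 (derivation action) if and only if there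 exist p ∈ Im ℍ and an ℝ-linear map σ : ℍⁿ → ℍⁿ that is right ℍ-linear (σ(x·q) = σ(x)·q for all x ∈ ℍⁿ, q ∈ ℍ) and skew-adjoint, such that A(x, v) = (σ(x) − x·p, p·v − v·p) for all x ∈ ℍⁿ, v ∈ Im ℍ. In particular, the stabilizer of τ^γ in so(V) is isomorphic as a Lie algebra to sp(n) ⊕ sp(1). -/
noncomputable section

open Quaternion

/-- The imaginary quaternions, as a real subspace of `ℍ`. -/
def ImQuat : Submodule ℝ ℍ[ℝ] where
  carrier := {q : ℍ[ℝ] | q.re = 0}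
  add_mem' := by
    intro a b ha hb
    simp only [Set.mem_setOf_eq] at *
    simp [ha, hb]
  zero_mem' := by simp
  smul_mem' := by
    intro c a ha
    simp only [Set.mem_setOf_eq] at *
    simp [ha]

lemma mem_ImQuat {q : ℍ[ℝ]} : q ∈ ImQuat ↔ q.re = 0 := Iff.rfl

/-- `V = ℍⁿ ⊕ Im ℍ`. -/
abbrev QuatV (n : ℕ) : Type := (Fin n → ℍ[ℝ]) × ImQuat

/-- The real inner product `⟨x,y⟩ = Re Σₘ xₘ ȳₘ` on `ℍⁿ`. -/
def innerHn {n : ℕ} (x y : Fin n → ℍ[ℝ]) : ℝ := ∑ m, (x m * star (y m)).re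

/-- The real inner product on `V = ℍⁿ ⊕ Im ℍ`. -/
def innerQuatV {n : ℕ} (v w : QuatV n) : ℝ :=
  innerHn v.1 w.1 + ((v.2 : ℍ[ℝ]) * star (w.2 : ℍ[ℝ])).re

/-- `ξ₁, ξ₂, ξ₃ = i, j, k ∈ Im ℍ`. -/
def xiQ : Fin 3 → ImQuat :=
  ![⟨⟨0, 1, 0, 0⟩, mem_ImQuat.mpr rfl⟩,
    ⟨⟨0, 0, 1, 0⟩, mem_ImQuat.mpr rfl⟩,
    ⟨⟨0, 0, 0, 1⟩, mem_ImQuat.mpr rfl⟩]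

/-- `ξ_l` viewed as an element of `V`. -/
def xiQV {n : ℕ} (l : Fin 3) : QuatV n := (0, xiQ l)

/-- `ω_l(x,y) = ⟨x·e_l, y⟩` on `ℍⁿ` (right multiplication by `e₁=i, e₂=j, e₃=k`). -/
def omegaQ {n : ℕ} (l : Fin 3) (x y : Fin n → ℍ[ℝ]) : ℝ :=
  innerHn (fun m => x m * (xiQ l : ℍ[ℝ])) y

/-- The 3-form `τ^γ = (α/2) Σ_l ξ_l♭ ∧ ω_l + (γ/2) ξ₁♭ ∧ ξ₂♭ ∧ ξ₃♭` on `V`. -/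
def tauQ {n : ℕ} (α γ : ℝ) (v : Fin 3 → QuatV n) : ℝ :=
  (α / 2) * ∑ l : Fin 3,
      (innerQuatV (xiQV l) (v 0) * omegaQ l (v 1).1 (v 2).1
        - innerQuatV (xiQV l) (v 1) * omegaQ l (v 0).1 (v 2).1
        + innerQuatV (xiQV l) (v 2) * omegaQ l (v 0).1 (v 1).1)
    + (γ / 2) * Matrix.det (Matrix.of fun i j => innerQuatV (xiQV i) (v j))

-- helpers
def xiE0 : ℍ[ℝ] := ⟨0,1,0,0⟩
@[simp] lemma xiE0_re : xiE0.re = 0 := rfl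
@[simp] lemma xiE0_imI : xiE0.imI = 1 := rfl
@[simp] lemma xiE0_imJ : xiE0.imJ = 0 := rfl
@[simp] lemma xiE0_imK : xiE0.imK = 0 := rfl
def xiE1 : ℍ[ℝ] := ⟨0,0,1,0⟩
@[simp] lemma xiE1_re : xiE1.re = 0 := rfl
@[simp] lemma xiE1_imI : xiE1.imI = 0 := rfl
@[simp] lemma xiE1_imJ : xiE1.imJ = 1 := rfl
@[simp] lemma xiE1_imK : xiE1.imK = 0 := rfl
def xiE2 : ℍ[ℝ] := ⟨0,0,0,1⟩
@[simp] lemma xiE2_re : xiE2.re = 0 := rfl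
@[simp] lemma xiE2_imI : xiE2.imI = 0 := rfl
@[simp] lemma xiE2_imJ : xiE2.imJ = 0 := rfl
@[simp] lemma xiE2_imK : xiE2.imK = 1 := rfl
def mkQ (a b c d : ℝ) : ℍ[ℝ] := ⟨a, b, c, d⟩
@[simp] lemma mkQ_re (a b c d : ℝ) : (mkQ a b c d).re = a := rfl
@[simp] lemma mkQ_imI (a b c d : ℝ) : (mkQ a b c d).imI = b := rfl
@[simp] lemma mkQ_imJ (a b c d : ℝ) : (mkQ a b c d).imJ = c := rfl
@[simp] lemma mkQ_imK (a b c d : ℝ) : (mkQ a b c d).imK = d := rfl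
lemma xiQ_val0 : ((xiQ 0 : ImQuat) : ℍ[ℝ]) = xiE0 := rfl
lemma xiQ_val1 : ((xiQ 1 : ImQuat) : ℍ[ℝ]) = xiE1 := rfl
lemma xiQ_val2 : ((xiQ 2 : ImQuat) : ℍ[ℝ]) = xiE2 := rfl

lemma innerHn_zero_left {n : ℕ} (y : Fin n → ℍ[ℝ]) : innerHn 0 y = 0 := by
  simp [innerHn]
lemma innerHn_zero_right {n : ℕ} (x : Fin n → ℍ[ℝ]) : innerHn x 0 = 0 := by
  simp [innerHn]

lemma innerQuatV_xi {n : ℕ} (l : Fin 3) (z : QuatV n) :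
    innerQuatV (xiQV l) z = ((xiQ l : ℍ[ℝ]) * star (z.2 : ℍ[ℝ])).re := by
  simp [innerQuatV, xiQV, innerHn_zero_left]

lemma re_xi0_star (q : ℍ[ℝ]) : ((xiQ 0 : ℍ[ℝ]) * star q).re = q.imI := by
  rw [xiQ_val0]; simp [Quaternion.re_mul, QuaternionAlgebra.re_mul]
lemma re_xi1_star (q : ℍ[ℝ]) : ((xiQ 1 : ℍ[ℝ]) * star q).re = q.imJ := by
  rw [xiQ_val1]; simp [Quaternion.re_mul, QuaternionAlgebra.re_mul]
lemma re_xi2_star (q : ℍ[ℝ]) : ((xiQ 2 : ℍ[ℝ]) * star q).re = q.imK := by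
  rw [xiQ_val2]; simp [Quaternion.re_mul, QuaternionAlgebra.re_mul]

lemma omegaQ_zero_left {n : ℕ} (l : Fin 3) (y : Fin n → ℍ[ℝ]) : omegaQ l 0 y = 0 := by
  simp [omegaQ, innerHn]
lemma omegaQ_zero_right {n : ℕ} (l : Fin 3) (x : Fin n → ℍ[ℝ]) : omegaQ l x 0 = 0 := by
  simp [omegaQ, innerHn]

lemma omegaQ_sub_left {n : ℕ} (l : Fin 3) (x y z : Fin n → ℍ[ℝ]) :
    omegaQ l (x - y) z = omegaQ l x z - omegaQ l y z := by
  simp only [omegaQ, innerHn, Pi.sub_apply, sub_mul, Quaternion.re_sub,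
    ← Finset.sum_sub_distrib]
lemma omegaQ_sub_right {n : ℕ} (l : Fin 3) (x y z : Fin n → ℍ[ℝ]) :
    omegaQ l x (y - z) = omegaQ l x y - omegaQ l x z := by
  simp only [omegaQ, innerHn, Pi.sub_apply, star_sub, mul_sub, Quaternion.re_sub,
    ← Finset.sum_sub_distrib]

lemma star_re_comm (a b : ℍ[ℝ]) : (a * star b).re = (b * star a).re := by
  simp [Quaternion.re_mul, QuaternionAlgebra.re_mul]; ring

lemma innerHn_eq_zero {n : ℕ} (x : Fin n → ℍ[ℝ]) (h : ∀ y, innerHn x y = 0) : x = 0 := by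
  have h2 := h x
  simp only [innerHn] at h2
  have hterm : ∀ m : Fin n, (x m * star (x m)).re = Quaternion.normSq (x m) := fun m => rfl
  rw [Finset.sum_congr rfl fun m _ => hterm m] at h2
  funext m
  have hnn : ∀ m : Fin n, (0:ℝ) ≤ Quaternion.normSq (x m) := by
    intro m; rw [Quaternion.normSq_def']; positivity
  have := (Finset.sum_eq_zero_iff_of_nonneg (fun m _ => hnn m)).mp h2 m (Finset.mem_univ m)
  have := Quaternion.normSq_eq_zero.mp this
  simpa using this

lemma innerHn_rp {n : ℕ} (x y : Fin n → ℍ[ℝ]) (p : ℍ[ℝ]) (hp : p.re = 0) :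
    innerHn (fun m => x m * p) y = - innerHn x (fun m => y m * p) := by
  simp only [innerHn, ← Finset.sum_neg_distrib]
  refine Finset.sum_congr rfl fun m _ => ?_
  simp [Quaternion.re_mul, QuaternionAlgebra.re_mul, Quaternion.imI_mul, QuaternionAlgebra.imI_mul, Quaternion.imJ_mul, QuaternionAlgebra.imJ_mul, Quaternion.imK_mul, QuaternionAlgebra.imK_mul, hp]
  ring

lemma omegaQ_rp0 {n : ℕ} (x y : Fin n → ℍ[ℝ]) (p : ℍ[ℝ]) (hp : p.re = 0) :
    omegaQ 0 (fun m => x m * p) y + omegaQ 0 x (fun m => y m * p)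
      = 2*p.imK * omegaQ 1 x y - 2*p.imJ * omegaQ 2 x y := by
  simp only [omegaQ, innerHn, Finset.mul_sum, ← Finset.sum_add_distrib,
    ← Finset.sum_sub_distrib]
  refine Finset.sum_congr rfl fun m _ => ?_
  rw [xiQ_val0, xiQ_val1, xiQ_val2]
  simp [Quaternion.re_mul, QuaternionAlgebra.re_mul, Quaternion.imI_mul, QuaternionAlgebra.imI_mul, Quaternion.imJ_mul, QuaternionAlgebra.imJ_mul, Quaternion.imK_mul, QuaternionAlgebra.imK_mul, hp]
  ring

lemma omegaQ_rp1 {n : ℕ} (x y : Fin n → ℍ[ℝ]) (p : ℍ[ℝ]) (hp : p.re = 0) :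
    omegaQ 1 (fun m => x m * p) y + omegaQ 1 x (fun m => y m * p)
      = 2*p.imI * omegaQ 2 x y - 2*p.imK * omegaQ 0 x y := by
  simp only [omegaQ, innerHn, Finset.mul_sum, ← Finset.sum_add_distrib,
    ← Finset.sum_sub_distrib]
  refine Finset.sum_congr rfl fun m _ => ?_
  rw [xiQ_val0, xiQ_val1, xiQ_val2]
  simp [Quaternion.re_mul, QuaternionAlgebra.re_mul, Quaternion.imI_mul, QuaternionAlgebra.imI_mul, Quaternion.imJ_mul, QuaternionAlgebra.imJ_mul, Quaternion.imK_mul, QuaternionAlgebra.imK_mul, hp]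
  ring

lemma omegaQ_rp2 {n : ℕ} (x y : Fin n → ℍ[ℝ]) (p : ℍ[ℝ]) (hp : p.re = 0) :
    omegaQ 2 (fun m => x m * p) y + omegaQ 2 x (fun m => y m * p)
      = 2*p.imJ * omegaQ 0 x y - 2*p.imI * omegaQ 1 x y := by
  simp only [omegaQ, innerHn, Finset.mul_sum, ← Finset.sum_add_distrib,
    ← Finset.sum_sub_distrib]
  refine Finset.sum_congr rfl fun m _ => ?_
  rw [xiQ_val0, xiQ_val1, xiQ_val2]
  simp [Quaternion.re_mul, QuaternionAlgebra.re_mul, Quaternion.imI_mul, QuaternionAlgebra.imI_mul, Quaternion.imJ_mul, QuaternionAlgebra.imJ_mul, Quaternion.imK_mul, QuaternionAlgebra.imK_mul, hp]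
  ring

lemma ad_imI (p q : ℍ[ℝ]) (hp : p.re = 0) (hq : q.re = 0) :
    (p * q - q * p).imI = 2*(p.imJ*q.imK - p.imK*q.imJ) := by
  simp [Quaternion.imI_mul, QuaternionAlgebra.imI_mul, hp, hq]; ring
lemma ad_imJ (p q : ℍ[ℝ]) (hp : p.re = 0) (hq : q.re = 0) :
    (p * q - q * p).imJ = 2*(p.imK*q.imI - p.imI*q.imK) := by
  simp [Quaternion.imJ_mul, QuaternionAlgebra.imJ_mul, hp, hq]; ring
lemma ad_imK (p q : ℍ[ℝ]) (hp : p.re = 0) (hq : q.re = 0) :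
    (p * q - q * p).imK = 2*(p.imI*q.imJ - p.imJ*q.imI) := by
  simp [Quaternion.imK_mul, QuaternionAlgebra.imK_mul, hp, hq]; ring

lemma omegaQ_sigma {n : ℕ} (σ : (Fin n → ℍ[ℝ]) →ₗ[ℝ] (Fin n → ℍ[ℝ]))
    (hlin : ∀ (x : Fin n → ℍ[ℝ]) (q : ℍ[ℝ]), σ (fun m => x m * q) = fun m => σ x m * q)
    (hskew : ∀ x y, innerHn (σ x) y = - innerHn x (σ y))
    (l : Fin 3) (x y : Fin n → ℍ[ℝ]) :
    omegaQ l (σ x) y = - omegaQ l x (σ y) := by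
  have h1 : (fun m => σ x m * (xiQ l : ℍ[ℝ])) = σ (fun m => x m * (xiQ l : ℍ[ℝ])) :=
    (hlin x _).symm
  simp only [omegaQ]
  rw [h1, hskew]

lemma backwardQ {n : ℕ} (α γ : ℝ) (A : QuatV n →ₗ[ℝ] QuatV n)
    (p : ImQuat) (σ : (Fin n → ℍ[ℝ]) →ₗ[ℝ] (Fin n → ℍ[ℝ]))
    (hlin : ∀ (x : Fin n → ℍ[ℝ]) (q : ℍ[ℝ]), σ (fun m => x m * q) = fun m => σ x m * q)
    (hskew : ∀ x y, innerHn (σ x) y = - innerHn x (σ y))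
    (hform : ∀ (x : Fin n → ℍ[ℝ]) (w : ImQuat),
        (A (x, w)).1 = σ x - (fun m => x m * (p : ℍ[ℝ])) ∧
        ((A (x, w)).2 : ℍ[ℝ]) = (p : ℍ[ℝ]) * (w : ℍ[ℝ]) - (w : ℍ[ℝ]) * (p : ℍ[ℝ])) :
    ∀ v : Fin 3 → QuatV n,
      ∑ j, tauQ α γ (Function.update v j (A (v j))) = 0 := by
  intro v
  have hp : (p : ℍ[ℝ]).re = 0 := p.2
  have hw : ∀ j, ((v j).2 : ℍ[ℝ]).re = 0 := fun j => ((v j).2).2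
  have h1 : ∀ j, (A (v j)).1 = σ (v j).1 - fun m => (v j).1 m * (p:ℍ[ℝ]) :=
    fun j => (hform (v j).1 (v j).2).1
  have h2 : ∀ j, ((A (v j)).2 : ℍ[ℝ])
      = (p:ℍ[ℝ]) * ((v j).2:ℍ[ℝ]) - ((v j).2:ℍ[ℝ]) * (p:ℍ[ℝ]) :=
    fun j => (hform (v j).1 (v j).2).2
  have hsig : ∀ (l : Fin 3) a b, omegaQ l a (σ b) = - omegaQ l (σ a) b := fun l a b => by
    rw [omegaQ_sigma σ hlin hskew l a b, neg_neg]
  have hr0 : ∀ a b : Fin n → ℍ[ℝ], omegaQ 0 a (fun m => b m * (p:ℍ[ℝ]))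
      = 2*(p:ℍ[ℝ]).imK * omegaQ 1 a b - 2*(p:ℍ[ℝ]).imJ * omegaQ 2 a b
        - omegaQ 0 (fun m => a m * (p:ℍ[ℝ])) b := fun a b => by
    linarith [omegaQ_rp0 a b (p:ℍ[ℝ]) hp]
  have hr1 : ∀ a b : Fin n → ℍ[ℝ], omegaQ 1 a (fun m => b m * (p:ℍ[ℝ]))
      = 2*(p:ℍ[ℝ]).imI * omegaQ 2 a b - 2*(p:ℍ[ℝ]).imK * omegaQ 0 a b
        - omegaQ 1 (fun m => a m * (p:ℍ[ℝ])) b := fun a b => by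
    linarith [omegaQ_rp1 a b (p:ℍ[ℝ]) hp]
  have hr2 : ∀ a b : Fin n → ℍ[ℝ], omegaQ 2 a (fun m => b m * (p:ℍ[ℝ]))
      = 2*(p:ℍ[ℝ]).imJ * omegaQ 0 a b - 2*(p:ℍ[ℝ]).imI * omegaQ 1 a b
        - omegaQ 2 (fun m => a m * (p:ℍ[ℝ])) b := fun a b => by
    linarith [omegaQ_rp2 a b (p:ℍ[ℝ]) hp]
  simp only [Fin.sum_univ_three, tauQ, Matrix.det_fin_three, Matrix.of_apply,
    Function.update_self,
    Function.update_of_ne (show (1:Fin 3) ≠ 0 by decide),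
    Function.update_of_ne (show (2:Fin 3) ≠ 0 by decide),
    Function.update_of_ne (show (0:Fin 3) ≠ 1 by decide),
    Function.update_of_ne (show (2:Fin 3) ≠ 1 by decide),
    Function.update_of_ne (show (0:Fin 3) ≠ 2 by decide),
    Function.update_of_ne (show (1:Fin 3) ≠ 2 by decide)]
  simp only [innerQuatV_xi, h1, h2]
  simp only [re_xi0_star, re_xi1_star, re_xi2_star]
  simp only [ad_imI, ad_imJ, ad_imK, hp, hw]
  simp only [omegaQ_sub_left, omegaQ_sub_right, hsig, hr0, hr1, hr2]
  ring

lemma innerHn_add_left {n : ℕ} (x y z : Fin n → ℍ[ℝ]) :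
    innerHn (x + y) z = innerHn x z + innerHn y z := by
  simp only [innerHn, Pi.add_apply, add_mul, Quaternion.re_add, ← Finset.sum_add_distrib]
lemma innerHn_sub_left {n : ℕ} (x y z : Fin n → ℍ[ℝ]) :
    innerHn (x - y) z = innerHn x z - innerHn y z := by
  simp only [innerHn, Pi.sub_apply, sub_mul, Quaternion.re_sub, ← Finset.sum_sub_distrib]
lemma innerHn_add_right {n : ℕ} (x y z : Fin n → ℍ[ℝ]) :
    innerHn x (y + z) = innerHn x y + innerHn x z := by
  simp only [innerHn, Pi.add_apply, star_add, mul_add, Quaternion.re_add,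
    ← Finset.sum_add_distrib]
lemma omegaQ_add_left {n : ℕ} (l : Fin 3) (x y z : Fin n → ℍ[ℝ]) :
    omegaQ l (x + y) z = omegaQ l x z + omegaQ l y z := by
  simp only [omegaQ, innerHn, Pi.add_apply, add_mul, Quaternion.re_add,
    ← Finset.sum_add_distrib]
lemma omegaQ_add_right {n : ℕ} (l : Fin 3) (x y z : Fin n → ℍ[ℝ]) :
    omegaQ l x (y + z) = omegaQ l x y + omegaQ l x z := by
  simp only [omegaQ, innerHn, Pi.add_apply, star_add, mul_add, Quaternion.re_add,
    ← Finset.sum_add_distrib]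

lemma innerHn_single {n : ℕ} (m₀ m₁ : Fin n) (a b : ℍ[ℝ]) :
    innerHn (Pi.single m₀ a) (Pi.single m₁ b) = if m₀ = m₁ then (a * star b).re else 0 := by
  simp only [innerHn]
  rw [Finset.sum_eq_single m₀]
  · rw [Pi.single_eq_same]
    by_cases h : m₀ = m₁
    · subst h; rw [Pi.single_eq_same, if_pos rfl]
    · rw [Pi.single_eq_of_ne h, if_neg h]; simp
  · intro m _ hm; rw [Pi.single_eq_of_ne hm]; simp
  · intro h; exact absurd (Finset.mem_univ m₀) h

lemma single_mul {n : ℕ} (m₀ : Fin n) (a c : ℍ[ℝ]) :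
    (fun m => (Pi.single m₀ a : Fin n → ℍ[ℝ]) m * c) = Pi.single m₀ (a * c) := by
  funext m
  rcases eq_or_ne m m₀ with h | h
  · subst h; simp
  · simp [Pi.single_eq_of_ne h]

lemma omegaQ_single {n : ℕ} (l : Fin 3) (m₀ m₁ : Fin n) (a b : ℍ[ℝ]) :
    omegaQ l (Pi.single m₀ a) (Pi.single m₁ b)
      = if m₀ = m₁ then ((a * (xiQ l : ℍ[ℝ])) * star b).re else 0 := by
  rw [omegaQ, single_mul, innerHn_single]

set_option maxHeartbeats 1000000 in
/-- Fix `n ≥ 2`, `α ≠ 0`, `γ ∈ ℝ`.  A skew-adjoint endomorphism `A` of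
`V = ℍⁿ ⊕ Im ℍ` stabilizes `τ^γ` under the derivation action if and only if there exist
`p ∈ Im ℍ` and a right `ℍ`-linear skew-adjoint `σ : ℍⁿ → ℍⁿ` with
`A(x, v) = (σ(x) − x·p, p·v − v·p)`; i.e. the stabilizer of `τ^γ` in `so(V)` is
`sp(n) ⊕ sp(1)`. -/
theorem stabilizer_of_three_alpha_delta_torsion
    (n : ℕ) (hn : 2 ≤ n) (α γ : ℝ) (hα : α ≠ 0)
    (A : QuatV n →ₗ[ℝ] QuatV n)
    (hA : ∀ v w : QuatV n, innerQuatV (A v) w = - innerQuatV v (A w)) :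
    (∀ v : Fin 3 → QuatV n,
        ∑ j, tauQ α γ (Function.update v j (A (v j))) = 0) ↔
    ∃ (p : ImQuat) (σ : (Fin n → ℍ[ℝ]) →ₗ[ℝ] (Fin n → ℍ[ℝ])),
      (∀ (x : Fin n → ℍ[ℝ]) (q : ℍ[ℝ]), σ (fun m => x m * q) = fun m => σ x m * q) ∧
      (∀ x y : Fin n → ℍ[ℝ], innerHn (σ x) y = - innerHn x (σ y)) ∧
      (∀ (x : Fin n → ℍ[ℝ]) (w : ImQuat),
        (A (x, w)).1 = σ x - (fun m => x m * (p : ℍ[ℝ])) ∧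
        ((A (x, w)).2 : ℍ[ℝ]) = (p : ℍ[ℝ]) * (w : ℍ[ℝ]) - (w : ℍ[ℝ]) * (p : ℍ[ℝ])) := by
  constructor
  · intro hstab
    have hD : ∀ x : Fin n → ℍ[ℝ], ((A (x, 0)).2 : ℍ[ℝ]) = 0 := by
      have key : ∀ (m₀ m₁ : Fin n), m₀ ≠ m₁ → ∀ q : ℍ[ℝ],
          ((A (Pi.single m₀ q, 0)).2 : ℍ[ℝ]) = 0 := by
        intro m₀ m₁ hne q
        have H0 := hstab ![(Pi.single m₀ q, (0:ImQuat)), (Pi.single m₁ 1, 0),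
          (Pi.single m₁ (-(xiQ 0 : ℍ[ℝ])), 0)]
        have H1 := hstab ![(Pi.single m₀ q, (0:ImQuat)), (Pi.single m₁ 1, 0),
          (Pi.single m₁ (-(xiQ 1 : ℍ[ℝ])), 0)]
        have H2 := hstab ![(Pi.single m₀ q, (0:ImQuat)), (Pi.single m₁ 1, 0),
          (Pi.single m₁ (-(xiQ 2 : ℍ[ℝ])), 0)]
        simp only [Fin.sum_univ_three, tauQ, Matrix.det_fin_three, Matrix.of_apply,
          Function.update_self,
          Function.update_of_ne (show (1:Fin 3) ≠ 0 by decide),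
          Function.update_of_ne (show (2:Fin 3) ≠ 0 by decide),
          Function.update_of_ne (show (0:Fin 3) ≠ 1 by decide),
          Function.update_of_ne (show (2:Fin 3) ≠ 1 by decide),
          Function.update_of_ne (show (0:Fin 3) ≠ 2 by decide),
          Function.update_of_ne (show (1:Fin 3) ≠ 2 by decide),
          Matrix.cons_val_zero, Matrix.cons_val_one, Matrix.head_cons,
          Matrix.cons_val_two, Matrix.tail_cons, innerQuatV_xi] at H0 H1 H2
        simp [omegaQ_single, if_neg hne, xiQ_val0, xiQ_val1, xiQ_val2,
          Quaternion.re_mul, QuaternionAlgebra.re_mul, hα] at H0 H1 H2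
        apply Quaternion.ext
        · exact mem_ImQuat.mp (A (Pi.single m₀ q, 0)).2.2
        · simpa using H0
        · simpa using H1
        · simpa using H2
      intro x
      have hm' : ∀ m₀ : Fin n, ∃ m₁, m₀ ≠ m₁ := by
        intro m₀
        rcases eq_or_ne m₀ ⟨0, by omega⟩ with h | h
        · exact ⟨⟨1, by omega⟩, by subst h; simp [Fin.ext_iff]⟩
        · exact ⟨⟨0, by omega⟩, h⟩
      have hsingle : ∀ (m₀ : Fin n) (q : ℍ[ℝ]), ((A (Pi.single m₀ q, 0)).2 : ℍ[ℝ]) = 0 := by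
        intro m₀ q
        obtain ⟨m₁, h⟩ := hm' m₀
        exact key m₀ m₁ h q
      have hx : ((x, (0:ImQuat)) : QuatV n) = ∑ m, ((Pi.single m (x m) : Fin n → ℍ[ℝ]), (0:ImQuat)) := by
        rw [Prod.ext_iff]
        constructor
        · simp [Prod.fst_sum, Finset.univ_sum_single]
        · simp [Prod.snd_sum]
      rw [hx, map_sum, Prod.snd_sum, AddSubmonoidClass.coe_finset_sum]
      exact Finset.sum_eq_zero fun m _ => hsingle m (x m)

    -- C = 0
    have hC : ∀ u : ImQuat, (A ((0 : Fin n → ℍ[ℝ]), u)).1 = 0 := by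
      intro u
      apply innerHn_eq_zero
      intro y
      have h := hA ((0 : Fin n → ℍ[ℝ]), u) (y, 0)
      simp only [innerQuatV, innerHn_zero_left, hD y] at h
      simpa using h
    -- B skew
    have hBskew : ∀ x y : Fin n → ℍ[ℝ],
        innerHn (A (x, 0)).1 y = - innerHn x (A (y, 0)).1 := by
      intro x y
      have h := hA ((x : Fin n → ℍ[ℝ]), (0:ImQuat)) (y, 0)
      simp only [innerQuatV] at h
      simpa using h
    -- skewness of E-matrix
    have he : ∀ l m : Fin 3,
        ((xiQ l : ℍ[ℝ]) * star ((A ((0:Fin n → ℍ[ℝ]), xiQ m)).2 : ℍ[ℝ])).re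
          = - ((xiQ m : ℍ[ℝ]) * star ((A ((0:Fin n → ℍ[ℝ]), xiQ l)).2 : ℍ[ℝ])).re := by
      intro l m
      have h := hA ((0:Fin n → ℍ[ℝ]), xiQ m) ((0:Fin n → ℍ[ℝ]), xiQ l)
      simp only [innerQuatV, innerHn_zero_left, innerHn_zero_right, hC] at h
      rw [star_re_comm] at h
      simpa [innerHn_zero_right] using h
    -- define p
    set E : Fin 3 → ℍ[ℝ] := fun m => ((A ((0:Fin n → ℍ[ℝ]), xiQ m)).2 : ℍ[ℝ]) with hEdef
    have hEre : ∀ m, (E m).re = 0 := fun m => mem_ImQuat.mp (A ((0:Fin n → ℍ[ℝ]), xiQ m)).2.2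
    have h00 := he 0 0
    have h01 := he 0 1
    have h02 := he 0 2
    have h11 := he 1 1
    have h12 := he 1 2
    have h22 := he 2 2
    rw [re_xi0_star] at h00
    rw [re_xi0_star, re_xi1_star] at h01
    rw [re_xi0_star, re_xi2_star] at h02
    rw [re_xi1_star] at h11
    rw [re_xi1_star, re_xi2_star] at h12
    rw [re_xi2_star] at h22
    obtain ⟨P, hPre, hE0, hE1, hE2⟩ :
        ∃ P : ℍ[ℝ], P.re = 0
          ∧ E 0 = P * (xiQ 0 : ℍ[ℝ]) - (xiQ 0 : ℍ[ℝ]) * P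
          ∧ E 1 = P * (xiQ 1 : ℍ[ℝ]) - (xiQ 1 : ℍ[ℝ]) * P
          ∧ E 2 = P * (xiQ 2 : ℍ[ℝ]) - (xiQ 2 : ℍ[ℝ]) * P := by
      refine ⟨mkQ 0 ((E 1).imK / 2) ((E 2).imI / 2) ((E 0).imJ / 2), rfl, ?_, ?_, ?_⟩ <;>
        (apply Quaternion.ext <;>
          simp [hEre, xiQ_val0, xiQ_val1, xiQ_val2, Quaternion.re_mul, QuaternionAlgebra.re_mul, Quaternion.imI_mul, QuaternionAlgebra.imI_mul,
            Quaternion.imJ_mul, QuaternionAlgebra.imJ_mul, Quaternion.imK_mul, QuaternionAlgebra.imK_mul] <;>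
          linarith [h00, h01, h02, h11, h12, h22])
    have adP : ∀ a b c : ℝ,
        a • (P * (xiQ 0:ℍ[ℝ]) - (xiQ 0:ℍ[ℝ]) * P) + b • (P * (xiQ 1:ℍ[ℝ]) - (xiQ 1:ℍ[ℝ]) * P)
          + c • (P * (xiQ 2:ℍ[ℝ]) - (xiQ 2:ℍ[ℝ]) * P)
        = P * (a • (xiQ 0:ℍ[ℝ]) + b • (xiQ 1:ℍ[ℝ]) + c • (xiQ 2:ℍ[ℝ]))
          - (a • (xiQ 0:ℍ[ℝ]) + b • (xiQ 1:ℍ[ℝ]) + c • (xiQ 2:ℍ[ℝ])) * P := by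
      intro a b c
      simp only [mul_add, add_mul, mul_smul_comm, smul_mul_assoc, smul_sub]
      abel
    have hEw : ∀ w : ImQuat, ((A ((0:Fin n → ℍ[ℝ]), w)).2 : ℍ[ℝ])
        = P * (w:ℍ[ℝ]) - (w:ℍ[ℝ]) * P := by
      intro w
      have hwre : (w:ℍ[ℝ]).re = 0 := w.2
      have hdecomp : ((0:Fin n → ℍ[ℝ]), w)
          = (w:ℍ[ℝ]).imI • ((0:Fin n → ℍ[ℝ]), xiQ 0) + (w:ℍ[ℝ]).imJ • ((0:Fin n → ℍ[ℝ]), xiQ 1)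
            + (w:ℍ[ℝ]).imK • ((0:Fin n → ℍ[ℝ]), xiQ 2) := by
        rw [Prod.ext_iff]
        constructor
        · simp
        · apply Subtype.ext
          push_cast
          apply Quaternion.ext <;> simp [xiQ_val0, xiQ_val1, xiQ_val2, hwre]
      have hwdec : (w:ℍ[ℝ]) = (w:ℍ[ℝ]).imI • (xiQ 0 : ℍ[ℝ]) + (w:ℍ[ℝ]).imJ • (xiQ 1 : ℍ[ℝ])
          + (w:ℍ[ℝ]).imK • (xiQ 2 : ℍ[ℝ]) := by
        apply Quaternion.ext <;> simp [xiQ_val0, xiQ_val1, xiQ_val2, hwre]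
      rw [hdecomp, map_add, map_add, map_smul, map_smul, map_smul]
      simp only [Prod.snd_add, Prod.smul_snd]
      push_cast
      have e0 : ((A ((0:Fin n → ℍ[ℝ]), xiQ 0)).2 : ℍ[ℝ]) = E 0 := rfl
      have e1 : ((A ((0:Fin n → ℍ[ℝ]), xiQ 1)).2 : ℍ[ℝ]) = E 1 := rfl
      have e2 : ((A ((0:Fin n → ℍ[ℝ]), xiQ 2)).2 : ℍ[ℝ]) = E 2 := rfl
      rw [e0, e1, e2, hE0, hE1, hE2, adP, ← hwdec]
    have hT0 : ∀ x y : Fin n → ℍ[ℝ],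
        omegaQ 0 (A (x, 0)).1 y + omegaQ 0 x (A (y, 0)).1
          + (E 0).imI * omegaQ 0 x y + (E 0).imJ * omegaQ 1 x y + (E 0).imK * omegaQ 2 x y = 0 := by
      intro x y
      have H := hstab ![(x, (0:ImQuat)), (y, 0), ((0:Fin n → ℍ[ℝ]), xiQ 0)]
      simp only [Fin.sum_univ_three, tauQ, Matrix.det_fin_three, Matrix.of_apply,
        Function.update_self,
        Function.update_of_ne (show (1:Fin 3) ≠ 0 by decide),
        Function.update_of_ne (show (2:Fin 3) ≠ 0 by decide),
        Function.update_of_ne (show (0:Fin 3) ≠ 1 by decide),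
        Function.update_of_ne (show (2:Fin 3) ≠ 1 by decide),
        Function.update_of_ne (show (0:Fin 3) ≠ 2 by decide),
        Function.update_of_ne (show (1:Fin 3) ≠ 2 by decide),
        Matrix.cons_val_zero, Matrix.cons_val_one, Matrix.head_cons,
        Matrix.cons_val_two, Matrix.tail_cons, innerQuatV_xi] at H
      simp [hD, hC, omegaQ_zero_left, omegaQ_zero_right, xiQ_val0, xiQ_val1, xiQ_val2,
        Quaternion.re_mul, QuaternionAlgebra.re_mul, hα] at H
      simp only [hEdef]
      rcases mul_eq_zero.mp (by linear_combination H :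
          α / 2 * (omegaQ 0 (A (x, 0)).1 y + omegaQ 0 x (A (y, 0)).1
            + ((A ((0:Fin n → ℍ[ℝ]), xiQ 0)).2 : ℍ[ℝ]).imI * omegaQ 0 x y
            + ((A ((0:Fin n → ℍ[ℝ]), xiQ 0)).2 : ℍ[ℝ]).imJ * omegaQ 1 x y
            + ((A ((0:Fin n → ℍ[ℝ]), xiQ 0)).2 : ℍ[ℝ]).imK * omegaQ 2 x y) = 0) with h | h
      · exact absurd (by linarith : α = 0) hα
      · exact h
    have hT1 : ∀ x y : Fin n → ℍ[ℝ],
        omegaQ 1 (A (x, 0)).1 y + omegaQ 1 x (A (y, 0)).1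
          + (E 1).imI * omegaQ 0 x y + (E 1).imJ * omegaQ 1 x y + (E 1).imK * omegaQ 2 x y = 0 := by
      intro x y
      have H := hstab ![(x, (0:ImQuat)), (y, 0), ((0:Fin n → ℍ[ℝ]), xiQ 1)]
      simp only [Fin.sum_univ_three, tauQ, Matrix.det_fin_three, Matrix.of_apply,
        Function.update_self,
        Function.update_of_ne (show (1:Fin 3) ≠ 0 by decide),
        Function.update_of_ne (show (2:Fin 3) ≠ 0 by decide),
        Function.update_of_ne (show (0:Fin 3) ≠ 1 by decide),
        Function.update_of_ne (show (2:Fin 3) ≠ 1 by decide),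
        Function.update_of_ne (show (0:Fin 3) ≠ 2 by decide),
        Function.update_of_ne (show (1:Fin 3) ≠ 2 by decide),
        Matrix.cons_val_zero, Matrix.cons_val_one, Matrix.head_cons,
        Matrix.cons_val_two, Matrix.tail_cons, innerQuatV_xi] at H
      simp [hD, hC, omegaQ_zero_left, omegaQ_zero_right, xiQ_val0, xiQ_val1, xiQ_val2,
        Quaternion.re_mul, QuaternionAlgebra.re_mul, hα] at H
      simp only [hEdef]
      rcases mul_eq_zero.mp (by linear_combination H :
          α / 2 * (omegaQ 1 (A (x, 0)).1 y + omegaQ 1 x (A (y, 0)).1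
            + ((A ((0:Fin n → ℍ[ℝ]), xiQ 1)).2 : ℍ[ℝ]).imI * omegaQ 0 x y
            + ((A ((0:Fin n → ℍ[ℝ]), xiQ 1)).2 : ℍ[ℝ]).imJ * omegaQ 1 x y
            + ((A ((0:Fin n → ℍ[ℝ]), xiQ 1)).2 : ℍ[ℝ]).imK * omegaQ 2 x y) = 0) with h | h
      · exact absurd (by linarith : α = 0) hα
      · exact h
    have hT2 : ∀ x y : Fin n → ℍ[ℝ],
        omegaQ 2 (A (x, 0)).1 y + omegaQ 2 x (A (y, 0)).1
          + (E 2).imI * omegaQ 0 x y + (E 2).imJ * omegaQ 1 x y + (E 2).imK * omegaQ 2 x y = 0 := by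
      intro x y
      have H := hstab ![(x, (0:ImQuat)), (y, 0), ((0:Fin n → ℍ[ℝ]), xiQ 2)]
      simp only [Fin.sum_univ_three, tauQ, Matrix.det_fin_three, Matrix.of_apply,
        Function.update_self,
        Function.update_of_ne (show (1:Fin 3) ≠ 0 by decide),
        Function.update_of_ne (show (2:Fin 3) ≠ 0 by decide),
        Function.update_of_ne (show (0:Fin 3) ≠ 1 by decide),
        Function.update_of_ne (show (2:Fin 3) ≠ 1 by decide),
        Function.update_of_ne (show (0:Fin 3) ≠ 2 by decide),
        Function.update_of_ne (show (1:Fin 3) ≠ 2 by decide),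
        Matrix.cons_val_zero, Matrix.cons_val_one, Matrix.head_cons,
        Matrix.cons_val_two, Matrix.tail_cons, innerQuatV_xi] at H
      simp [hD, hC, omegaQ_zero_left, omegaQ_zero_right, xiQ_val0, xiQ_val1, xiQ_val2,
        Quaternion.re_mul, QuaternionAlgebra.re_mul, hα] at H
      simp only [hEdef]
      rcases mul_eq_zero.mp (by linear_combination H :
          α / 2 * (omegaQ 2 (A (x, 0)).1 y + omegaQ 2 x (A (y, 0)).1
            + ((A ((0:Fin n → ℍ[ℝ]), xiQ 2)).2 : ℍ[ℝ]).imI * omegaQ 0 x y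
            + ((A ((0:Fin n → ℍ[ℝ]), xiQ 2)).2 : ℍ[ℝ]).imJ * omegaQ 1 x y
            + ((A ((0:Fin n → ℍ[ℝ]), xiQ 2)).2 : ℍ[ℝ]).imK * omegaQ 2 x y) = 0) with h | h
      · exact absurd (by linarith : α = 0) hα
      · exact h
    -- build σ
    set Rp : (Fin n → ℍ[ℝ]) →ₗ[ℝ] (Fin n → ℍ[ℝ]) :=
      { toFun := fun x => fun m => x m * P
        map_add' := fun x y => by funext m; simp [add_mul]
        map_smul' := fun c x => by funext m; simp [smul_mul_assoc] } with hRpdef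
    set Bl : (Fin n → ℍ[ℝ]) →ₗ[ℝ] (Fin n → ℍ[ℝ]) :=
      (LinearMap.fst ℝ (Fin n → ℍ[ℝ]) ImQuat).comp
        (A.comp (LinearMap.inl ℝ (Fin n → ℍ[ℝ]) ImQuat)) with hBldef
    set σ : (Fin n → ℍ[ℝ]) →ₗ[ℝ] (Fin n → ℍ[ℝ]) := Bl + Rp with hσdef
    have hσx : ∀ x, σ x = (A (x, 0)).1 + fun m => x m * P := fun x => rfl
    have hσskew : ∀ x y, innerHn (σ x) y = - innerHn x (σ y) := by
      intro x y
      rw [hσx, hσx, innerHn_add_left, innerHn_add_right, hBskew, innerHn_rp x y P hPre]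
      ring
    have hcomm0 : ∀ x : Fin n → ℍ[ℝ],
        σ (fun m => x m * (xiQ 0 : ℍ[ℝ])) = fun m => σ x m * (xiQ 0 : ℍ[ℝ]) := by
      intro x
      have key : ∀ y, innerHn ((fun m => σ x m * (xiQ 0:ℍ[ℝ]))
          - σ (fun m => x m * (xiQ 0:ℍ[ℝ]))) y = 0 := by
        intro y
        rw [innerHn_sub_left]
        have h1 : innerHn (fun m => σ x m * (xiQ 0:ℍ[ℝ])) y = omegaQ 0 (σ x) y := rfl
        have h2 : innerHn (σ (fun m => x m * (xiQ 0:ℍ[ℝ]))) y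
            = - innerHn (fun m => x m * (xiQ 0:ℍ[ℝ])) (σ y) := hσskew _ _
        have h3 : innerHn (fun m => x m * (xiQ 0:ℍ[ℝ])) (σ y) = omegaQ 0 x (σ y) := rfl
        rw [h1, h2, h3]
        have hx1 : omegaQ 0 (σ x) y
            = omegaQ 0 (A (x,0)).1 y + omegaQ 0 (fun m => x m * P) y := by
          rw [hσx, omegaQ_add_left]
        have hy1 : omegaQ 0 x (σ y)
            = omegaQ 0 x (A (y,0)).1 + omegaQ 0 x (fun m => y m * P) := by
          rw [hσx, omegaQ_add_right]
        have c0I : (E 0).imI = 0 := by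
          rw [hE0, xiQ_val0]; simp [Quaternion.imI_mul, QuaternionAlgebra.imI_mul]
        have c0J : (E 0).imJ = 2*P.imK := by
          rw [hE0, xiQ_val0]; simp [Quaternion.imJ_mul, QuaternionAlgebra.imJ_mul]; ring
        have c0K : (E 0).imK = -(2*P.imJ) := by
          rw [hE0, xiQ_val0]; simp [Quaternion.imK_mul, QuaternionAlgebra.imK_mul]; ring
        have t := hT0 x y
        rw [c0I, c0J, c0K] at t
        have r := omegaQ_rp0 x y P hPre
        rw [hx1, hy1]
        linarith [t, r]
      exact (sub_eq_zero.mp (innerHn_eq_zero _ key)).symm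
    have hcomm1 : ∀ x : Fin n → ℍ[ℝ],
        σ (fun m => x m * (xiQ 1 : ℍ[ℝ])) = fun m => σ x m * (xiQ 1 : ℍ[ℝ]) := by
      intro x
      have key : ∀ y, innerHn ((fun m => σ x m * (xiQ 1:ℍ[ℝ]))
          - σ (fun m => x m * (xiQ 1:ℍ[ℝ]))) y = 0 := by
        intro y
        rw [innerHn_sub_left]
        have h1 : innerHn (fun m => σ x m * (xiQ 1:ℍ[ℝ])) y = omegaQ 1 (σ x) y := rfl
        have h2 : innerHn (σ (fun m => x m * (xiQ 1:ℍ[ℝ]))) y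
            = - innerHn (fun m => x m * (xiQ 1:ℍ[ℝ])) (σ y) := hσskew _ _
        have h3 : innerHn (fun m => x m * (xiQ 1:ℍ[ℝ])) (σ y) = omegaQ 1 x (σ y) := rfl
        rw [h1, h2, h3]
        have hx1 : omegaQ 1 (σ x) y
            = omegaQ 1 (A (x,0)).1 y + omegaQ 1 (fun m => x m * P) y := by
          rw [hσx, omegaQ_add_left]
        have hy1 : omegaQ 1 x (σ y)
            = omegaQ 1 x (A (y,0)).1 + omegaQ 1 x (fun m => y m * P) := by
          rw [hσx, omegaQ_add_right]
        have c1I : (E 1).imI = -(2*P.imK) := by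
          rw [hE1, xiQ_val1]; simp [Quaternion.imI_mul, QuaternionAlgebra.imI_mul]; ring
        have c1J : (E 1).imJ = 0 := by
          rw [hE1, xiQ_val1]; simp [Quaternion.imJ_mul, QuaternionAlgebra.imJ_mul]
        have c1K : (E 1).imK = 2*P.imI := by
          rw [hE1, xiQ_val1]; simp [Quaternion.imK_mul, QuaternionAlgebra.imK_mul]; ring
        have t := hT1 x y
        rw [c1I, c1J, c1K] at t
        have r := omegaQ_rp1 x y P hPre
        rw [hx1, hy1]
        linarith [t, r]
      exact (sub_eq_zero.mp (innerHn_eq_zero _ key)).symm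
    have hcomm2 : ∀ x : Fin n → ℍ[ℝ],
        σ (fun m => x m * (xiQ 2 : ℍ[ℝ])) = fun m => σ x m * (xiQ 2 : ℍ[ℝ]) := by
      intro x
      have key : ∀ y, innerHn ((fun m => σ x m * (xiQ 2:ℍ[ℝ]))
          - σ (fun m => x m * (xiQ 2:ℍ[ℝ]))) y = 0 := by
        intro y
        rw [innerHn_sub_left]
        have h1 : innerHn (fun m => σ x m * (xiQ 2:ℍ[ℝ])) y = omegaQ 2 (σ x) y := rfl
        have h2 : innerHn (σ (fun m => x m * (xiQ 2:ℍ[ℝ]))) y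
            = - innerHn (fun m => x m * (xiQ 2:ℍ[ℝ])) (σ y) := hσskew _ _
        have h3 : innerHn (fun m => x m * (xiQ 2:ℍ[ℝ])) (σ y) = omegaQ 2 x (σ y) := rfl
        rw [h1, h2, h3]
        have hx1 : omegaQ 2 (σ x) y
            = omegaQ 2 (A (x,0)).1 y + omegaQ 2 (fun m => x m * P) y := by
          rw [hσx, omegaQ_add_left]
        have hy1 : omegaQ 2 x (σ y)
            = omegaQ 2 x (A (y,0)).1 + omegaQ 2 x (fun m => y m * P) := by
          rw [hσx, omegaQ_add_right]
        have c2I : (E 2).imI = 2*P.imJ := by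
          rw [hE2, xiQ_val2]; simp [Quaternion.imI_mul, QuaternionAlgebra.imI_mul]; ring
        have c2J : (E 2).imJ = -(2*P.imI) := by
          rw [hE2, xiQ_val2]; simp [Quaternion.imJ_mul, QuaternionAlgebra.imJ_mul]; ring
        have c2K : (E 2).imK = 0 := by
          rw [hE2, xiQ_val2]; simp [Quaternion.imK_mul, QuaternionAlgebra.imK_mul]
        have t := hT2 x y
        rw [c2I, c2J, c2K] at t
        have r := omegaQ_rp2 x y P hPre
        rw [hx1, hy1]
        linarith [t, r]
      exact (sub_eq_zero.mp (innerHn_eq_zero _ key)).symm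
    have hσlin : ∀ (x : Fin n → ℍ[ℝ]) (q : ℍ[ℝ]),
        σ (fun m => x m * q) = fun m => σ x m * q := by
      intro x q
      have hq : (fun m => x m * q)
          = q.re • x + q.imI • (fun m => x m * (xiQ 0:ℍ[ℝ]))
            + q.imJ • (fun m => x m * (xiQ 1:ℍ[ℝ])) + q.imK • (fun m => x m * (xiQ 2:ℍ[ℝ])) := by
        funext m
        simp only [Pi.add_apply, Pi.smul_apply]
        apply Quaternion.ext <;>
          simp [xiQ_val0, xiQ_val1, xiQ_val2, Quaternion.re_mul, QuaternionAlgebra.re_mul, Quaternion.imI_mul, QuaternionAlgebra.imI_mul,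
            Quaternion.imJ_mul, QuaternionAlgebra.imJ_mul, Quaternion.imK_mul, QuaternionAlgebra.imK_mul] <;> ring
      rw [hq, map_add, map_add, map_add, map_smul, map_smul, map_smul, map_smul,
        hcomm0, hcomm1, hcomm2]
      funext m
      simp only [Pi.add_apply, Pi.smul_apply]
      apply Quaternion.ext <;>
        simp [xiQ_val0, xiQ_val1, xiQ_val2, Quaternion.re_mul, QuaternionAlgebra.re_mul, Quaternion.imI_mul, QuaternionAlgebra.imI_mul,
          Quaternion.imJ_mul, QuaternionAlgebra.imJ_mul, Quaternion.imK_mul, QuaternionAlgebra.imK_mul] <;> ring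
    have hsplit : ∀ (x : Fin n → ℍ[ℝ]) (w : ImQuat),
        ((x, w) : QuatV n) = (x, (0:ImQuat)) + ((0:Fin n → ℍ[ℝ]), w) := by
      intro x w
      rw [Prod.ext_iff]
      constructor <;> simp
    refine ⟨⟨P, hPre⟩, σ, hσlin, hσskew, fun x w => ⟨?_, ?_⟩⟩
    · simp only [show (((⟨P, hPre⟩ : ImQuat)) : ℍ[ℝ]) = P from rfl]
      rw [hsplit x w, map_add, Prod.fst_add, hC w, add_zero, hσx, add_sub_cancel_right]
    · simp only [show (((⟨P, hPre⟩ : ImQuat)) : ℍ[ℝ]) = P from rfl]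
      rw [hsplit x w, map_add, Prod.snd_add, AddSubmonoid.coe_add, hD x, hEw w, zero_add]
  · rintro ⟨p, σ, hlin, hskew, hform⟩
    exact backwardQ α γ A p σ hlin hskew hform

end
end

section
/- Let V be a finite-dimensional real inner product space and g ⊆ so(V) a Lie subalgebra. Let W ⊆ V be a g-invariant subspace that is irreducible as a g-module, and suppose that the subspace g_W := {A ∈ g : A vanishes on the orthogonal complement W^⊥} is nonzero (it is automatically an ideal of g acting faithfully on W). Then every g-invariant alternating 3-form τ on V vanishes whenever one of its arguments lies in W and the other two lie in W^⊥: τ(x, y, z) = 0 for all x ∈ W and y, z ∈ W^⊥. -/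
open RealInnerProductSpace

attribute [local instance 100] LieRing.ofAssociativeRing

/-- Let `V` be a finite-dimensional real inner product space, `g ⊆ so(V)`
a Lie subalgebra, `W ⊆ V` a `g`-invariant irreducible subspace with
`g_W = {A ∈ g : A|_{W^⊥} = 0} ≠ 0`.  Then every `g`-invariant alternating 3-form `τ` on `V`
satisfies `τ(x,y,z) = 0` whenever `x ∈ W` and `y, z ∈ W^⊥`. -/
theorem invariant_three_form_vanishes_mixed
    {V : Type*} [NormedAddCommGroup V] [InnerProductSpace ℝ V] [FiniteDimensional ℝ V]
    (g : LieSubalgebra ℝ (Module.End ℝ V))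
    (hskew : ∀ A ∈ g, ∀ x y : V, ⟪A x, y⟫ = - ⟪x, A y⟫)
    (W : Submodule ℝ V)
    (hWinv : ∀ A ∈ g, ∀ w ∈ W, A w ∈ W)
    (hWne : W ≠ ⊥)
    (hWirr : ∀ W' : Submodule ℝ V, W' ≤ W → (∀ A ∈ g, ∀ w ∈ W', A w ∈ W') →
      W' = ⊥ ∨ W' = W)
    (hgW : ∃ A ∈ g, (∀ x ∈ Wᗮ, A x = 0) ∧ A ≠ 0)
    (τ : AlternatingMap ℝ V ℝ (Fin 3))
    (hτinv : ∀ A ∈ g, ∀ x y z : V,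
      τ ![A x, y, z] + τ ![x, A y, z] + τ ![x, y, A z] = 0) :
    ∀ x ∈ W, ∀ y ∈ Wᗮ, ∀ z ∈ Wᗮ, τ ![x, y, z] = 0 := by
  -- `Wᗮ` is `g`-invariant
  have hperp : ∀ A ∈ g, ∀ v ∈ Wᗮ, A v ∈ Wᗮ := by
    intro A hA v hv
    rw [Submodule.mem_orthogonal]
    intro u hu
    rw [real_inner_comm, hskew A hA v u, real_inner_comm]
    simp [(Submodule.mem_orthogonal W v).1 hv (A u) (hWinv A hA u hu)]
  -- updating the first coordinate
  have hupd0 : ∀ (a b c d : V), Function.update ![a, b, c] 0 d = ![d, b, c] := by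
    intro a b c d
    ext i
    fin_cases i <;> simp
  -- the subspace of `w ∈ W` on which the mixed form vanishes
  let U : Submodule ℝ V :=
    { carrier := {w | w ∈ W ∧ ∀ y ∈ Wᗮ, ∀ z ∈ Wᗮ, τ ![w, y, z] = 0}
      add_mem' := by
        rintro a b ⟨haW, ha⟩ ⟨hbW, hb⟩
        refine ⟨W.add_mem haW hbW, ?_⟩
        intro y hy z hz
        have := τ.map_update_add ![a, y, z] 0 a b
        rw [hupd0, hupd0, hupd0] at this
        rw [this, ha y hy z hz, hb y hy z hz, add_zero]
      zero_mem' := by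
        refine ⟨W.zero_mem, ?_⟩
        intro y hy z hz
        exact τ.map_coord_zero 0 (by simp)
      smul_mem' := by
        rintro c a ⟨haW, ha⟩
        refine ⟨W.smul_mem c haW, ?_⟩
        intro y hy z hz
        have := τ.map_update_smul ![a, y, z] 0 c a
        rw [hupd0, hupd0] at this
        rw [this, ha y hy z hz, smul_zero] }
  have hUle : U ≤ W := fun w hw => hw.1
  have hUinv : ∀ A ∈ g, ∀ w ∈ U, A w ∈ U := by
    intro A hA w hw
    refine ⟨hWinv A hA w hw.1, ?_⟩
    intro y hy z hz
    have h := hτinv A hA w y z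
    have h1 : τ ![w, A y, z] = 0 := hw.2 (A y) (hperp A hA y hy) z hz
    have h2 : τ ![w, y, A z] = 0 := hw.2 y hy (A z) (hperp A hA z hz)
    rw [h1, h2] at h
    linarith
  -- U is nonzero
  obtain ⟨A, hA, hA0, hAne⟩ := hgW
  obtain ⟨v, hv⟩ : ∃ v, A v ≠ 0 := by
    by_contra h
    push_neg at h
    exact hAne (LinearMap.ext h)
  have hAvW : A v ∈ W := by
    rw [← W.orthogonal_orthogonal]
    rw [Submodule.mem_orthogonal]
    intro u hu
    rw [real_inner_comm, hskew A hA v u, hA0 u hu]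
    simp
  have hAvU : A v ∈ U := by
    refine ⟨hAvW, ?_⟩
    intro y hy z hz
    have h := hτinv A hA v y z
    rw [hA0 y hy, hA0 z hz] at h
    have h1 : τ ![v, (0 : V), z] = 0 := τ.map_coord_zero 1 (by simp)
    have h2 : τ ![v, y, (0 : V)] = 0 := τ.map_coord_zero 2 (by simp)
    rw [h1, h2] at h
    linarith
  have hUne : U ≠ ⊥ := by
    intro h
    rw [h] at hAvU
    exact hv hAvU
  have hUW : U = W := (hWirr U hUle hUinv).resolve_left hUne
  intro x hx y hy z hz
  have hxU : x ∈ U := hUW ▸ hx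
  exact hxU.2 y hy z hz
end

section
/- Let n ≥ 2, let V = ℝ ⊕ ℂⁿ with the standard real inner product (⟨(s,z),(t,w)⟩ = s·t + Re Σₘ zₘ w̄ₘ), let ξ = (1, 0), and let Φ be the skew-adjoint endomorphism of V given by Φ(s, z) = (0, i·z). Let τ = ξ♭ ∧ ω be the alternating 3-form on V, where ω(x,y) = ⟨Φx, y⟩ and (ξ♭∧ω)(X,Y,Z) = ⟨ξ,X⟩ω(Y,Z) − ⟨ξ,Y⟩ω(X,Z) + ⟨ξ,Z⟩ω(X,Y). Then the stabilizer of τ in so(V) equals {A ∈ so(V) : Aξ = 0 and A∘Φ = Φ∘A}; in particular it is isomorphic as a Lie algebra to u(n). -/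
noncomputable section

/-- `V = ℝ ⊕ ℂⁿ`. -/
abbrev SasakiV (n : ℕ) : Type := ℝ × (Fin n → ℂ)

/-- The standard real inner product on `V = ℝ ⊕ ℂⁿ`. -/
def sasakiInner {n : ℕ} (v w : SasakiV n) : ℝ :=
  v.1 * w.1 + (∑ m, v.2 m * (starRingEnd ℂ) (w.2 m)).re

/-- `ξ = (1, 0)`. -/
def sasakiXi {n : ℕ} : SasakiV n := (1, 0)

/-- The skew-adjoint endomorphism `Φ(s, z) = (0, i·z)`. -/
def sasakiPhi (n : ℕ) : Module.End ℝ (SasakiV n) :=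
  LinearMap.prod 0
    ((LinearMap.restrictScalars ℝ
        (Complex.I • (LinearMap.id : (Fin n → ℂ) →ₗ[ℂ] (Fin n → ℂ)))) ∘ₗ
      LinearMap.snd ℝ ℝ (Fin n → ℂ))

/-- `ω(x,y) = ⟨Φx, y⟩`. -/
def sasakiOmega {n : ℕ} (x y : SasakiV n) : ℝ := sasakiInner (sasakiPhi n x) y

/-- `τ = ξ♭ ∧ ω`. -/
def sasakiTau {n : ℕ} (X Y Z : SasakiV n) : ℝ :=
  sasakiInner sasakiXi X * sasakiOmega Y Z
    - sasakiInner sasakiXi Y * sasakiOmega X Z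
    + sasakiInner sasakiXi Z * sasakiOmega X Y

lemma inner_xi {n : ℕ} (v : SasakiV n) : sasakiInner sasakiXi v = v.1 := by
  simp [sasakiInner, sasakiXi]
lemma xi_inner {n : ℕ} (v : SasakiV n) : sasakiInner v sasakiXi = v.1 := by
  simp [sasakiInner, sasakiXi]
lemma omega_eq {n : ℕ} (x y : SasakiV n) :
    sasakiOmega x y = (∑ m, Complex.I * x.2 m * (starRingEnd ℂ) (y.2 m)).re := by
  simp [sasakiOmega, sasakiInner, sasakiPhi, mul_assoc]
lemma inner_single {n : ℕ} (v : SasakiV n) (m : Fin n) (c : ℂ) :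
    sasakiInner v (0, Pi.single m c) = (v.2 m * (starRingEnd ℂ) c).re := by
  simp [sasakiInner, Pi.single_apply, apply_ite, Finset.sum_ite_eq]
lemma omega_single_left {n : ℕ} (y : SasakiV n) (m : Fin n) (c : ℂ) :
    sasakiOmega ((0, Pi.single m c) : SasakiV n) y
      = (Complex.I * c * (starRingEnd ℂ) (y.2 m)).re := by
  simp [omega_eq, Pi.single_apply, apply_ite, ite_mul, Finset.sum_ite_eq]
lemma omega_single_right {n : ℕ} (x : SasakiV n) (m : Fin n) (c : ℂ) :
    sasakiOmega x ((0, Pi.single m c) : SasakiV n)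
      = (Complex.I * x.2 m * (starRingEnd ℂ) c).re := by
  simp [omega_eq, Pi.single_apply, apply_ite, mul_ite, Finset.sum_ite_eq]
lemma tau_apply {n : ℕ} (X Y Z : SasakiV n) :
    sasakiTau X Y Z = X.1 * sasakiOmega Y Z - Y.1 * sasakiOmega X Z
      + Z.1 * sasakiOmega X Y := by
  simp [sasakiTau, inner_xi]
lemma omega_xi_left {n : ℕ} (y : SasakiV n) : sasakiOmega sasakiXi y = 0 := by
  simp [omega_eq, sasakiXi]
lemma omega_zero_left {n : ℕ} (y : SasakiV n) : sasakiOmega 0 y = 0 := by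
  simp [omega_eq]
lemma sasakiXi_fst {n : ℕ} : (sasakiXi : SasakiV n).1 = 1 := rfl
lemma phi_apply {n : ℕ} (v : SasakiV n) :
    sasakiPhi n v = ((0, Complex.I • v.2) : SasakiV n) := rfl

/-- For `n ≥ 2` and `V = ℝ ⊕ ℂⁿ` with `ξ = (1,0)`, `Φ(s,z) = (0, i z)` and
`τ = ξ♭ ∧ ω`, a skew-adjoint endomorphism `A` of `V` stabilizes `τ` (derivation action) if
and only if `A ξ = 0` and `A ∘ Φ = Φ ∘ A`; i.e. the stabilizer of `τ` in `so(V)` is `u(n)`. -/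
theorem stabilizer_of_sasaki_torsion
    (n : ℕ) (hn : 2 ≤ n) (A : Module.End ℝ (SasakiV n))
    (hA : ∀ v w : SasakiV n, sasakiInner (A v) w = - sasakiInner v (A w)) :
    (∀ X Y Z : SasakiV n,
        sasakiTau (A X) Y Z + sasakiTau X (A Y) Z + sasakiTau X Y (A Z) = 0) ↔
    (A sasakiXi = 0 ∧ A ∘ₗ sasakiPhi n = sasakiPhi n ∘ₗ A) := by
  constructor
  · intro hstab
    -- Step B: first components of A on the complex part vanish
    have hfst : ∀ (m : Fin n) (c : ℂ), (A ((0, Pi.single m c) : SasakiV n)).1 = 0 := by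
      intro m c
      obtain ⟨k, hk⟩ : ∃ k : Fin n, k ≠ m := by
        rcases Nat.eq_zero_or_pos m.1 with h | h
        · exact ⟨⟨1, by omega⟩, by simp [Fin.ext_iff, h]⟩
        · exact ⟨⟨0, by omega⟩, by simp [Fin.ext_iff]; omega⟩
      have h := hstab (0, Pi.single m c) (0, Pi.single k 1) (0, Pi.single k Complex.I)
      simp only [tau_apply, omega_single_left, omega_single_right] at h
      simp [Pi.single_eq_of_ne hk, Pi.single_eq_of_ne hk.symm, Complex.ext_iff] at h
      linarith
    -- Step A: A ξ = 0
    have hxi : A sasakiXi = 0 := by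
      have h1 : (A sasakiXi).1 = 0 := by
        have := hA sasakiXi sasakiXi
        rw [xi_inner, inner_xi] at this
        linarith
      have h2 : ∀ m : Fin n, (A sasakiXi).2 m = 0 := by
        intro m
        have hre : ∀ c : ℂ, sasakiInner (A sasakiXi) (0, Pi.single m c) = 0 := by
          intro c
          rw [hA sasakiXi (0, Pi.single m c), inner_xi, hfst m c, neg_zero]
        have r1 := hre 1
        have r2 := hre Complex.I
        rw [inner_single] at r1 r2
        simp [Complex.ext_iff, Complex.mul_re] at r1 r2 ⊢
        constructor <;> linarith
      ext
      · exact h1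
      · exact h2 _
    refine ⟨hxi, ?_⟩
    -- every image has zero first component
    have h0 : ∀ v : SasakiV n, (A v).1 = 0 := by
      intro v
      have h := hA v sasakiXi
      rw [xi_inner, hxi] at h
      simpa [sasakiInner] using h
    -- R1 relation
    have R1 : ∀ y z : Fin n → ℂ,
        sasakiOmega (A (0, y)) ((0, z) : SasakiV n)
          + sasakiOmega ((0, y) : SasakiV n) (A (0, z)) = 0 := by
      intro y z
      have h := hstab sasakiXi (0, y) (0, z)
      rw [hxi] at h
      simp only [tau_apply, omega_xi_left, omega_zero_left, sasakiXi_fst, Prod.fst_zero, zero_mul, mul_zero, mul_one, one_mul, sub_zero, zero_sub, add_zero,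
        zero_add, neg_zero] at h
      linarith
    -- second components commute with I
    have key : ∀ y : Fin n → ℂ,
        A ((0, Complex.I • y) : SasakiV n)
          = ((0, Complex.I • (A ((0, y) : SasakiV n)).2) : SasakiV n) := by
      intro y
      have hz : ∀ z : Fin n → ℂ,
          sasakiInner (A ((0, Complex.I • y) : SasakiV n)) ((0, z) : SasakiV n)
            = sasakiInner ((0, Complex.I • (A ((0, y) : SasakiV n)).2) : SasakiV n)
                ((0, z) : SasakiV n) := by
        intro z
        rw [hA]
        have e1 : sasakiInner ((0, Complex.I • y) : SasakiV n) (A ((0, z) : SasakiV n))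
            = sasakiOmega ((0, y) : SasakiV n) (A ((0, z) : SasakiV n)) := by
          simp [sasakiInner, omega_eq, mul_assoc]
        have e2 : sasakiInner ((0, Complex.I • (A ((0, y) : SasakiV n)).2) : SasakiV n)
              ((0, z) : SasakiV n)
            = sasakiOmega (A ((0, y) : SasakiV n)) ((0, z) : SasakiV n) := by
          simp [sasakiInner, omega_eq, mul_assoc]
        rw [e1, e2]
        have := R1 y z
        linarith
      ext
      · simpa using h0 (0, Complex.I • y)
      · rename_i m
        have r1 := hz (Pi.single m 1)
        have r2 := hz (Pi.single m Complex.I)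
        rw [inner_single, inner_single] at r1
        rw [inner_single, inner_single] at r2
        simp [Complex.ext_iff, Complex.mul_re] at r1 r2 ⊢
        constructor <;> linarith
    -- conclude commutation
    apply LinearMap.ext
    intro v
    have hv2 : (A v).2 = (A ((0, v.2) : SasakiV n)).2 := by
      have hsplit : v = v.1 • sasakiXi + ((0, v.2) : SasakiV n) := by
        ext <;> simp [sasakiXi]
      rw [hsplit, map_add, map_smul, hxi]
      simp [sasakiXi]
    show A (sasakiPhi n v) = sasakiPhi n (A v)
    rw [phi_apply v, phi_apply (A v), key v.2, hv2]
  · rintro ⟨hxi, hcomm⟩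
    have h0 : ∀ v : SasakiV n, (A v).1 = 0 := by
      intro v
      have h := hA v sasakiXi
      rw [xi_inner, hxi] at h
      simpa [sasakiInner] using h
    have h1 : ∀ v w : SasakiV n,
        sasakiOmega (A v) w + sasakiOmega v (A w) = 0 := by
      intro v w
      have hc : sasakiPhi n (A v) = A (sasakiPhi n v) :=
        (LinearMap.ext_iff.mp hcomm v).symm
      unfold sasakiOmega
      rw [hc, hA (sasakiPhi n v) w]
      ring
    intro X Y Z
    simp only [tau_apply]
    linear_combination sasakiOmega Y Z * h0 X - sasakiOmega X Z * h0 Y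
      + sasakiOmega X Y * h0 Z + X.1 * h1 Y Z - Y.1 * h1 X Z + Z.1 * h1 X Y


end
end

section
/- Let V = ℂ³ regarded as a 6-dimensional real inner product space with ⟨x,y⟩ = Re Σₘ xₘ ȳₘ, and let τ = Re(dz₁ ∧ dz₂ ∧ dz₃) be the real part of the standard complex volume 3-form, i.e. τ(x,y,z) = Re(det_ℂ(x, y, z)) viewed as an alternating real 3-form on V. Then a skew-adjoint endomorphism A of V stabilizes τ (i.e. A·τ = 0 under the derivation action) if and only if A is ℂ-linear and its complex trace is zero; that is, the stabilizer of τ in so(6) equals su(3). -/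
noncomputable section

/-- The real inner product on `ℂ³`, `⟨x,y⟩ = Re Σₘ xₘ ȳₘ`. -/
def innerC3 (x y : Fin 3 → ℂ) : ℝ := (∑ m, x m * (starRingEnd ℂ) (y m)).re

/-- `τ(x,y,z) = Re (det_ℂ (x y z))`, the real part of the standard complex volume form. -/
def grayTau (x y z : Fin 3 → ℂ) : ℝ :=
  (Matrix.det (Matrix.of fun i j => (![x, y, z] j) i)).re

open Complex

lemma grayTau_apply (x y z : Fin 3 → ℂ) :
    grayTau x y z = (x 0 * y 1 * z 2 - x 0 * z 1 * y 2 - y 0 * x 1 * z 2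
      + y 0 * z 1 * x 2 + z 0 * x 1 * y 2 - z 0 * y 1 * x 2).re := by
  unfold grayTau
  rw [Matrix.det_fin_three]
  norm_num [Matrix.of_apply]
  rfl

/-- The standard basis vectors of `ℂ³`. -/
def e3 (j : Fin 3) : Fin 3 → ℂ := Pi.single j 1

lemma e3_apply (j m : Fin 3) : e3 j m = if m = j then 1 else 0 := by
  simp [e3, Pi.single_apply]

lemma decompC3 (x : Fin 3 → ℂ) :
    x = (x 0).re • e3 0 + (x 0).im • (I • e3 0)
      + ((x 1).re • e3 1 + (x 1).im • (I • e3 1))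
      + ((x 2).re • e3 2 + (x 2).im • (I • e3 2)) := by
  funext m
  fin_cases m <;> simp [e3, Pi.single_apply, Complex.real_smul]

/-- A skew-adjoint endomorphism `A` of `ℂ³` (as a 6-dimensional real inner
product space) stabilizes `τ = Re(dz₁∧dz₂∧dz₃)` under the derivation action if and only if
`A` is `ℂ`-linear with complex trace zero; i.e. the stabilizer of `τ` in `so(6)` is `su(3)`. -/
theorem stabilizer_of_gray_torsion
    (A : Module.End ℝ (Fin 3 → ℂ))
    (hA : ∀ x y : Fin 3 → ℂ, innerC3 (A x) y = - innerC3 x (A y)) :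
    (∀ x y z : Fin 3 → ℂ,
        grayTau (A x) y z + grayTau x (A y) z + grayTau x y (A z) = 0) ↔
    ∃ B : (Fin 3 → ℂ) →ₗ[ℂ] (Fin 3 → ℂ),
      LinearMap.trace ℂ (Fin 3 → ℂ) B = 0 ∧ ∀ x, A x = B x := by
  have hAx : ∀ (x : Fin 3 → ℂ) (m : Fin 3), A x m
      = ((x 0).re : ℂ) * A (e3 0) m + ((x 0).im : ℂ) * A (I • e3 0) m
      + ((x 1).re : ℂ) * A (e3 1) m + ((x 1).im : ℂ) * A (I • e3 1) m
      + ((x 2).re : ℂ) * A (e3 2) m + ((x 2).im : ℂ) * A (I • e3 2) m := by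
    intro x m
    conv_lhs => rw [decompC3 x]
    simp [map_add, map_smul, Complex.real_smul]
    ring
  constructor
  · intro hτ
    -- skew-adjointness facts (diagonal entries)
    have S10 := hA (e3 0) (e3 0)
    simp [innerC3, e3_apply, Fin.sum_univ_three] at S10
    have S11 := hA (e3 1) (e3 1)
    simp [innerC3, e3_apply, Fin.sum_univ_three] at S11
    have S12 := hA (e3 2) (e3 2)
    simp [innerC3, e3_apply, Fin.sum_univ_three] at S12
    have S20 := hA (I • e3 0) (I • e3 0)
    simp [innerC3, e3_apply, Fin.sum_univ_three] at S20
    have S21 := hA (I • e3 1) (I • e3 1)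
    simp [innerC3, e3_apply, Fin.sum_univ_three] at S21
    have S22 := hA (I • e3 2) (I • e3 2)
    simp [innerC3, e3_apply, Fin.sum_univ_three] at S22
    have S30 := hA (I • e3 0) (e3 0)
    simp [innerC3, e3_apply, Fin.sum_univ_three] at S30
    have S31 := hA (I • e3 1) (e3 1)
    simp [innerC3, e3_apply, Fin.sum_univ_three] at S31
    have S32 := hA (I • e3 2) (e3 2)
    simp [innerC3, e3_apply, Fin.sum_univ_three] at S32
    -- τ equations: trace-type
    have E0 := hτ (e3 0) (e3 1) (e3 2)
    simp [grayTau_apply, e3_apply] at E0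
    have D0 := hτ (I • e3 0) (e3 1) (e3 2)
    simp [grayTau_apply, e3_apply] at D0
    have D1 := hτ (e3 0) (I • e3 1) (e3 2)
    simp [grayTau_apply, e3_apply] at D1
    have D2 := hτ (e3 0) (e3 1) (I • e3 2)
    simp [grayTau_apply, e3_apply] at D2
    -- τ equations: off-diagonal
    have F01r := hτ (I • e3 0) (e3 0) (e3 2)
    simp [grayTau_apply, e3_apply] at F01r
    have F01i := hτ (I • e3 0) (e3 0) (I • e3 2)
    simp [grayTau_apply, e3_apply] at F01i
    have F02r := hτ (I • e3 0) (e3 0) (e3 1)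
    simp [grayTau_apply, e3_apply] at F02r
    have F02i := hτ (I • e3 0) (e3 0) (I • e3 1)
    simp [grayTau_apply, e3_apply] at F02i
    have F10r := hτ (I • e3 1) (e3 1) (e3 2)
    simp [grayTau_apply, e3_apply] at F10r
    have F10i := hτ (I • e3 1) (e3 1) (I • e3 2)
    simp [grayTau_apply, e3_apply] at F10i
    have F12r := hτ (I • e3 1) (e3 1) (e3 0)
    simp [grayTau_apply, e3_apply] at F12r
    have F12i := hτ (I • e3 1) (e3 1) (I • e3 0)
    simp [grayTau_apply, e3_apply] at F12i
    have F20r := hτ (I • e3 2) (e3 2) (e3 1)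
    simp [grayTau_apply, e3_apply] at F20r
    have F20i := hτ (I • e3 2) (e3 2) (I • e3 1)
    simp [grayTau_apply, e3_apply] at F20i
    have F21r := hτ (I • e3 2) (e3 2) (e3 0)
    simp [grayTau_apply, e3_apply] at F21r
    have F21i := hτ (I • e3 2) (e3 2) (I • e3 0)
    simp [grayTau_apply, e3_apply] at F21i
    -- A(i e_j) = i A(e_j), entrywise
    have K0 : ∀ m, A (I • e3 0) m = I * A (e3 0) m := by
      have k0 : A (I • e3 0) 0 = I * A (e3 0) 0 := by
        apply Complex.ext <;> simp [Complex.mul_re, Complex.mul_im] <;> linarith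
      have k1 : A (I • e3 0) 1 = I * A (e3 0) 1 := by
        apply Complex.ext <;> simp [Complex.mul_re, Complex.mul_im] <;> linarith
      have k2 : A (I • e3 0) 2 = I * A (e3 0) 2 := by
        apply Complex.ext <;> simp [Complex.mul_re, Complex.mul_im] <;> linarith
      intro m; fin_cases m
      · exact k0
      · exact k1
      · exact k2
    have K1 : ∀ m, A (I • e3 1) m = I * A (e3 1) m := by
      have k0 : A (I • e3 1) 0 = I * A (e3 1) 0 := by
        apply Complex.ext <;> simp [Complex.mul_re, Complex.mul_im] <;> linarith
      have k1 : A (I • e3 1) 1 = I * A (e3 1) 1 := by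
        apply Complex.ext <;> simp [Complex.mul_re, Complex.mul_im] <;> linarith
      have k2 : A (I • e3 1) 2 = I * A (e3 1) 2 := by
        apply Complex.ext <;> simp [Complex.mul_re, Complex.mul_im] <;> linarith
      intro m; fin_cases m
      · exact k0
      · exact k1
      · exact k2
    have K2 : ∀ m, A (I • e3 2) m = I * A (e3 2) m := by
      have k0 : A (I • e3 2) 0 = I * A (e3 2) 0 := by
        apply Complex.ext <;> simp [Complex.mul_re, Complex.mul_im] <;> linarith
      have k1 : A (I • e3 2) 1 = I * A (e3 2) 1 := by
        apply Complex.ext <;> simp [Complex.mul_re, Complex.mul_im] <;> linarith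
      have k2 : A (I • e3 2) 2 = I * A (e3 2) 2 := by
        apply Complex.ext <;> simp [Complex.mul_re, Complex.mul_im] <;> linarith
      intro m; fin_cases m
      · exact k0
      · exact k1
      · exact k2
    -- complex linearity
    have hsmul : ∀ (c : ℂ) (x : Fin 3 → ℂ), A (c • x) = c • A x := by
      intro c x
      funext m
      rw [Pi.smul_apply, smul_eq_mul, hAx (c • x) m, hAx x m]
      simp only [Pi.smul_apply, smul_eq_mul, K0, K1, K2]
      apply Complex.ext <;>
        simp [Complex.mul_re, Complex.mul_im, Complex.add_re, Complex.add_im] <;> ring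
    refine ⟨{ toFun := A, map_add' := map_add A, map_smul' := hsmul }, ?_, fun x => rfl⟩
    rw [LinearMap.trace_eq_matrix_trace ℂ (Pi.basisFun ℂ (Fin 3))]
    have hse : ∀ j : Fin 3, (Pi.single j (1 : ℂ) : Fin 3 → ℂ) = e3 j := fun _ => rfl
    simp only [Matrix.trace, Matrix.diag, LinearMap.toMatrix_apply, Fin.sum_univ_three,
      Pi.basisFun_apply, Pi.basisFun_repr, LinearMap.coe_mk, AddHom.coe_mk, hse]
    apply Complex.ext <;> simp <;> linarith
  · rintro ⟨B, htr, hAB⟩ x y z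
    have hBpt : ∀ (w : Fin 3 → ℂ) (m : Fin 3),
        B w m = w 0 * B (e3 0) m + w 1 * B (e3 1) m + w 2 * B (e3 2) m := by
      intro w m
      have hw : w = w 0 • e3 0 + w 1 • e3 1 + w 2 • e3 2 := by
        funext k; fin_cases k <;> simp [e3, Pi.single_apply]
      conv_lhs => rw [hw]
      simp [map_add, map_smul]
    have htr' : B (e3 0) 0 + B (e3 1) 1 + B (e3 2) 2 = 0 := by
      rw [LinearMap.trace_eq_matrix_trace ℂ (Pi.basisFun ℂ (Fin 3))] at htr
      have hse : ∀ j : Fin 3, (Pi.single j (1 : ℂ) : Fin 3 → ℂ) = e3 j := fun _ => rfl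
      simpa [Matrix.trace, Matrix.diag, LinearMap.toMatrix_apply, Fin.sum_univ_three,
        Pi.basisFun_apply, Pi.basisFun_repr, hse] using htr
    rw [hAB x, hAB y, hAB z, grayTau_apply, grayTau_apply, grayTau_apply,
      ← Complex.add_re, ← Complex.add_re]
    have key : (B x 0 * y 1 * z 2 - B x 0 * z 1 * y 2 - y 0 * B x 1 * z 2
        + y 0 * z 1 * B x 2 + z 0 * B x 1 * y 2 - z 0 * y 1 * B x 2)
      + (x 0 * B y 1 * z 2 - x 0 * z 1 * B y 2 - B y 0 * x 1 * z 2
        + B y 0 * z 1 * x 2 + z 0 * x 1 * B y 2 - z 0 * B y 1 * x 2)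
      + (x 0 * y 1 * B z 2 - x 0 * B z 1 * y 2 - y 0 * x 1 * B z 2
        + y 0 * B z 1 * x 2 + B z 0 * x 1 * y 2 - B z 0 * y 1 * x 2) = 0 := by
      simp only [hBpt x, hBpt y, hBpt z]
      linear_combination (x 0 * y 1 * z 2 - x 0 * z 1 * y 2 - y 0 * x 1 * z 2
        + y 0 * z 1 * x 2 + z 0 * x 1 * y 2 - z 0 * y 1 * x 2) * htr'
    rw [key]
    simp

end
end

section
/- Let m be a finite-dimensional real inner product space and h ⊆ so(m) a Lie subalgebra. Suppose g = h ⊕ m carries a Lie algebra bracket such that: (i) the bracket on h × h is the commutator of endomorphisms; (ii) [A, X] = −[X, A] = A(X) for A ∈ h and X ∈ m; (iii) the m-component of [X, Y], for X, Y ∈ m, equals −2τ_X Y, where τ is an alternating 3-form on m with associated (2,1)-tensor defined by ⟨τ_X Y, Z⟩ = τ(X,Y,Z); the h-component of [X,Y] may be arbitrary. Assume moreover that for every X ∈ m, the endomorphism τ_X is orthogonal to h inside so(m) with respect to the trace inner product ⟨α, β⟩ = −tr(α∘β). Then the Killing form B of g satisfies B(X, A) = 0 for all X ∈ m and A ∈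 h, and B is negative definite on h; indeed B(A, A) = −|A|² − Σⱼ |[A, fⱼ]|² for A ∈ h, where (fⱼ) is any orthonormal basis of h for the trace inner product and |·| is the corresponding norm. -/
open RealInnerProductSpace

attribute [local instance 100] LieRing.ofAssociativeRing

open LinearMap

section Aux
variable {mm : Type*} [NormedAddCommGroup mm] [InnerProductSpace ℝ mm] [FiniteDimensional ℝ mm]

lemma skew_trace_sq_aux (C : Module.End ℝ mm)
    (hC : ∀ x y : mm, ⟪C x, y⟫ = - ⟪x, C y⟫) :
    LinearMap.trace ℝ mm (C ∘ₗ C) ≤ 0 ∧ (C ≠ 0 → LinearMap.trace ℝ mm (C ∘ₗ C) < 0) := by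
  classical
  let b := stdOrthonormalBasis ℝ mm
  have htr : LinearMap.trace ℝ mm (C ∘ₗ C) = ∑ i, - ⟪C (b i), C (b i)⟫ := by
    rw [LinearMap.trace_eq_matrix_trace ℝ b.toBasis, Matrix.trace]
    refine Finset.sum_congr rfl fun i _ => ?_
    rw [Matrix.diag_apply, LinearMap.toMatrix_apply, b.coe_toBasis_repr_apply]
    have hb : b.toBasis i = b i := congrFun b.coe_toBasis i
    rw [hb, b.repr_apply_apply, LinearMap.comp_apply]
    have h1 := hC (b i) (C (b i))
    linarith
  constructor
  · rw [htr]
    exact Finset.sum_nonpos fun i _ => neg_nonpos.mpr real_inner_self_nonneg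
  · intro hCne
    rw [htr]
    have hex : ∃ i, C (b i) ≠ 0 := by
      by_contra hall
      push_neg at hall
      refine hCne (b.toBasis.ext fun i => ?_)
      rw [congrFun b.coe_toBasis i, hall i]
      simp
    obtain ⟨i, hi⟩ := hex
    have := Finset.sum_lt_sum (s := Finset.univ)
      (f := fun j => -⟪C (b j), C (b j)⟫) (g := fun _ => (0:ℝ))
      (fun j _ => neg_nonpos.mpr real_inner_self_nonneg)
      ⟨i, Finset.mem_univ i, by
        have hne : ⟪C (b i), C (b i)⟫ ≠ 0 := fun h0 => hi (inner_self_eq_zero.mp h0)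
        have := lt_of_le_of_ne real_inner_self_nonneg (Ne.symm hne)
        simpa using this⟩
    simpa using this

lemma trace_lie_mul' {R M : Type*} [CommRing R] [AddCommGroup M] [Module R M]
    (a b c : Module.End R M) :
    LinearMap.trace R M (⁅a, b⁆ * c) = LinearMap.trace R M (a * ⁅b, c⁆) := by
  simp only [Ring.lie_def, sub_mul, mul_sub, map_sub]
  rw [mul_assoc a b c, mul_assoc b a c, LinearMap.trace_mul_cycle' R b a c,
    LinearMap.trace_mul_cycle' R c b a]

lemma trace_eq_sum_form' {V : Type*} [AddCommGroup V] [Module ℝ V] [FiniteDimensional ℝ V]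
    {ι : Type} [Fintype ι] [DecidableEq ι]
    (K : V →ₗ[ℝ] V →ₗ[ℝ] ℝ) (f : ι → V)
    (hspan : Submodule.span ℝ (Set.range f) = ⊤)
    (honb : ∀ i j, K (f i) (f j) = if i = j then 1 else 0)
    (L : V →ₗ[ℝ] V) :
    LinearMap.trace ℝ V L = ∑ j, K (L (f j)) (f j) := by
  classical
  have hli : LinearIndependent ℝ f := by
    rw [linearIndependent_iff']
    intro s g hg i hi
    have h0 := congrArg (fun w => K w (f i)) hg
    simp only [map_sum, LinearMap.coe_sum, Finset.sum_apply, map_smul,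
      LinearMap.smul_apply, honb, smul_eq_mul, mul_ite, mul_one, mul_zero,
      map_zero, LinearMap.zero_apply] at h0
    rwa [Finset.sum_ite_eq' s i g, if_pos hi] at h0
  let b : Module.Basis ι ℝ V := Module.Basis.mk hli hspan.ge
  have hb : ∀ i, b i = f i := fun i => Module.Basis.mk_apply hli hspan.ge i
  have hrepr : ∀ (v : V) (j : ι), K v (f j) = b.repr v j := by
    intro v j
    conv_lhs => rw [← b.sum_repr v]
    simp only [map_sum, map_smul, LinearMap.coe_sum, Finset.sum_apply,
      LinearMap.smul_apply, hb, honb, smul_eq_mul, mul_ite, mul_one, mul_zero]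
    simp [Finset.sum_ite_eq']
  rw [LinearMap.trace_eq_matrix_trace ℝ b L, Matrix.trace]
  refine Finset.sum_congr rfl fun j _ => ?_
  rw [Matrix.diag_apply, LinearMap.toMatrix_apply, hb, hrepr]

lemma exists_onb_family' {V : Type*} [AddCommGroup V] [Module ℝ V] [FiniteDimensional ℝ V]
    (K : LinearMap.BilinForm ℝ V) (hsymm : K.IsSymm)
    (hpos : ∀ v : V, v ≠ 0 → 0 < K v v) :
    ∃ (n : ℕ) (f : Fin n → V), Submodule.span ℝ (Set.range f) = ⊤ ∧
      ∀ i j, K (f i) (f j) = if i = j then 1 else 0 := by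
  classical
  obtain ⟨v, hv⟩ := LinearMap.BilinForm.exists_orthogonal_basis (LinearMap.BilinForm.isSymm_iff.mp hsymm)
  refine ⟨Module.finrank ℝ V, fun i => (Real.sqrt (K (v i) (v i)))⁻¹ • v i, ?_, ?_⟩
  · rw [eq_top_iff, ← v.span_eq]
    refine Submodule.span_le.mpr ?_
    rintro _ ⟨i, rfl⟩
    have hKi : 0 < K (v i) (v i) := hpos _ (v.ne_zero i)
    have hs : Real.sqrt (K (v i) (v i)) ≠ 0 := ne_of_gt (Real.sqrt_pos.mpr hKi)
    have hvi : v i = Real.sqrt (K (v i) (v i)) • ((Real.sqrt (K (v i) (v i)))⁻¹ • v i) := by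
      rw [smul_smul, mul_inv_cancel₀ hs, one_smul]
    rw [hvi]
    exact Submodule.smul_mem _ _ (Submodule.subset_span ⟨i, rfl⟩)
  · intro i j
    by_cases hij : i = j
    · subst hij
      have hKi : 0 < K (v i) (v i) := hpos _ (v.ne_zero i)
      simp only [map_smul, LinearMap.smul_apply, smul_eq_mul, if_pos rfl]
      have hss : Real.sqrt (K (v i) (v i)) * Real.sqrt (K (v i) (v i)) = K (v i) (v i) :=
        Real.mul_self_sqrt hKi.le
      rw [← mul_assoc, ← mul_inv, hss]
      exact inv_mul_cancel₀ (ne_of_gt hKi)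
    · have h0 : K (v i) (v j) = 0 := LinearMap.isOrthoᵢ_def.mp hv i j hij
      simp only [map_smul, LinearMap.smul_apply, smul_eq_mul, h0, mul_zero]
      rw [if_neg hij]

end Aux


section TF
variable {mm : Type*} [NormedAddCommGroup mm] [InnerProductSpace ℝ mm] [FiniteDimensional ℝ mm]

/-- The trace form `⟨B,C⟩ = -tr(B C)` on a Lie subalgebra of endomorphisms. -/
noncomputable def traceFormOn (h : LieSubalgebra ℝ (Module.End ℝ mm)) :
    LinearMap.BilinForm ℝ h :=
  -(((LinearMap.mul ℝ (Module.End ℝ mm)).compr₂ (LinearMap.trace ℝ mm)).compl₁₂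
      h.incl.toLinearMap h.incl.toLinearMap)

@[simp] lemma traceFormOn_apply (h : LieSubalgebra ℝ (Module.End ℝ mm)) (B C : h) :
    traceFormOn h B C
      = - LinearMap.trace ℝ mm ((B : Module.End ℝ mm) * (C : Module.End ℝ mm)) := rfl

end TF

set_option maxHeartbeats 2000000 in
/-- Let `m` be a finite-dimensional real inner product space,
`h ⊆ so(m)` a Lie subalgebra, and `g = h ⊕ m` a Lie algebra whose bracket restricts to the
commutator on `h`, satisfies `[A, X] = A(X)` for `A ∈ h`, `X ∈ m`, and whose `m`-component
on `m × m` is `−2 τ_X Y` for an alternating 3-form `τ` with `⟨τ_X Y, Z⟩ = τ(X,Y,Z)`.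
If every `τ_X` is orthogonal to `h` for the trace inner product `⟨α,β⟩ = −tr(α∘β)`, then
the Killing form `B` of `g` satisfies `B(m, h) = 0`, the formula
`B(A,A) = −|A|² − Σⱼ |[A,fⱼ]|²` for any trace-orthonormal basis `(fⱼ)` of `h`, and `B` is
negative definite on `h`. -/
theorem transvection_killing_form
    {m : Type*} [NormedAddCommGroup m] [InnerProductSpace ℝ m] [FiniteDimensional ℝ m]
    (h : LieSubalgebra ℝ (Module.End ℝ m))
    (hskew : ∀ A ∈ h, ∀ x y : m, ⟪A x, y⟫ = - ⟪x, A y⟫)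
    {G : Type*} [LieRing G] [LieAlgebra ℝ G]
    (e : G ≃ₗ[ℝ] (h × m))
    (τ : AlternatingMap ℝ m ℝ (Fin 3))
    (T : m →ₗ[ℝ] Module.End ℝ m)
    (hT : ∀ X Y Z : m, ⟪T X Y, Z⟫ = τ ![X, Y, Z])
    (hbr_hh : ∀ A B : h, ⁅e.symm (A, 0), e.symm (B, 0)⁆ = e.symm (⁅A, B⁆, 0))
    (hbr_hm : ∀ (A : h) (X : m),
      ⁅e.symm (A, 0), e.symm (0, X)⁆ = e.symm (0, (A : Module.End ℝ m) X))
    (hbr_mm : ∀ X Y : m, (e ⁅e.symm (0, X), e.symm (0, Y)⁆).2 = (-2 : ℝ) • T X Y)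
    (horth : ∀ X : m, ∀ A ∈ h, LinearMap.trace ℝ m (T X ∘ₗ A) = 0) :
    (∀ (X : m) (A : h), killingForm ℝ G (e.symm (0, X)) (e.symm (A, 0)) = 0) ∧
    (∀ (ι : Type) [Fintype ι] [DecidableEq ι] (f : ι → h),
      Submodule.span ℝ (Set.range f) = (⊤ : Submodule ℝ h) →
      (∀ i j, - LinearMap.trace ℝ m ((f i : Module.End ℝ m) ∘ₗ (f j : Module.End ℝ m))
          = if i = j then 1 else 0) →
      ∀ A : h,
        killingForm ℝ G (e.symm (A, 0)) (e.symm (A, 0))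
          = LinearMap.trace ℝ m ((A : Module.End ℝ m) ∘ₗ (A : Module.End ℝ m))
            + ∑ j, LinearMap.trace ℝ m
                (((⁅A, f j⁆ : h) : Module.End ℝ m) ∘ₗ ((⁅A, f j⁆ : h) : Module.End ℝ m))) ∧
    (∀ A : h, A ≠ 0 → killingForm ℝ G (e.symm (A, 0)) (e.symm (A, 0)) < 0) := by
  classical
  -- the conjugated adjoint action of `h`-elements is a product map
  have hφA : ∀ A : h, e.conj (LieAlgebra.ad ℝ G (e.symm (A, 0)))
      = LinearMap.prodMap (LieAlgebra.ad ℝ h A) (A : Module.End ℝ m) := by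
    intro A
    apply LinearMap.ext
    rintro ⟨B, Y⟩
    have h2 : e.symm ((B, Y) : h × m) = e.symm (B, 0) + e.symm (0, Y) := by
      rw [← map_add]; norm_num
    rw [LinearEquiv.conj_apply_apply, LieAlgebra.ad_apply, h2, lie_add, hbr_hh, hbr_hm,
      ← map_add, LinearEquiv.apply_symm_apply]
    simp [LieAlgebra.ad_apply, Prod.ext_iff]
  have hkil : ∀ x y : G, killingForm ℝ G x y
      = LinearMap.trace ℝ (h × m)
          (e.conj (LieAlgebra.ad ℝ G x) ∘ₗ e.conj (LieAlgebra.ad ℝ G y)) := by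
    intro x y
    rw [killingForm_apply_apply, ← LinearEquiv.conj_comp, LinearMap.trace_conj']
  haveI : FiniteDimensional ℝ h :=
    FiniteDimensional.of_injective h.incl.toLinearMap Subtype.coe_injective
  -- Part 1
  have part1 : ∀ (X : m) (A : h), killingForm ℝ G (e.symm (0, X)) (e.symm (A, 0)) = 0 := by
    intro X A
    rw [hkil]
    set P := e.conj (LieAlgebra.ad ℝ G (e.symm (0, X))) with hP
    set Q := e.conj (LieAlgebra.ad ℝ G (e.symm ((A : h), 0))) with hQ
    have hsplit : P ∘ₗ Q
        = (P ∘ₗ LinearMap.inl ℝ h m) ∘ₗ (LinearMap.fst ℝ h m ∘ₗ Q)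
          + (P ∘ₗ LinearMap.inr ℝ h m) ∘ₗ (LinearMap.snd ℝ h m ∘ₗ Q) := by
      apply LinearMap.ext; intro p
      simp only [LinearMap.add_apply, LinearMap.comp_apply, LinearMap.inl_apply,
        LinearMap.inr_apply, LinearMap.fst_apply, LinearMap.snd_apply]
      rw [← map_add]
      congr 1
      simp
    have hPB : ∀ B : h, P ((B : h), (0 : m)) = ((0 : h), -((B : Module.End ℝ m) X)) := by
      intro B
      rw [hP, LinearEquiv.conj_apply_apply, LieAlgebra.ad_apply, ← lie_skew, hbr_hm,
        ← map_neg, LinearEquiv.apply_symm_apply]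
      simp
    have h1 : (LinearMap.fst ℝ h m ∘ₗ Q) ∘ₗ (P ∘ₗ LinearMap.inl ℝ h m) = 0 := by
      apply LinearMap.ext; intro B
      simp only [LinearMap.comp_apply, LinearMap.inl_apply, LinearMap.zero_apply,
        LinearMap.fst_apply]
      rw [hPB B, hQ, hφA]
      simp
    have h2 : (LinearMap.snd ℝ h m ∘ₗ Q) ∘ₗ (P ∘ₗ LinearMap.inr ℝ h m)
        = (-2 : ℝ) • ((A : Module.End ℝ m) ∘ₗ T X) := by
      apply LinearMap.ext; intro Y
      simp only [LinearMap.comp_apply, LinearMap.inr_apply, LinearMap.snd_apply,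
        LinearMap.smul_apply]
      have hPY : P ((0 : h), Y) = e ⁅e.symm (0, X), e.symm (0, Y)⁆ := by
        rw [hP, LinearEquiv.conj_apply_apply, LieAlgebra.ad_apply]
      rw [hPY, hQ, hφA, LinearMap.prodMap_apply]
      simp only [hbr_mm X Y, map_smul]
    rw [hsplit, map_add,
      LinearMap.trace_comp_comm' (LinearMap.fst ℝ h m ∘ₗ Q) (P ∘ₗ LinearMap.inl ℝ h m),
      LinearMap.trace_comp_comm' (LinearMap.snd ℝ h m ∘ₗ Q) (P ∘ₗ LinearMap.inr ℝ h m),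
      h1, h2, map_zero, zero_add, map_smul,
      LinearMap.trace_comp_comm' (T X) (A : Module.End ℝ m), horth X A A.2]
    simp
  -- Part 2
  have part2 : ∀ (ι : Type) [Fintype ι] [DecidableEq ι] (f : ι → h),
      Submodule.span ℝ (Set.range f) = (⊤ : Submodule ℝ h) →
      (∀ i j, - LinearMap.trace ℝ m ((f i : Module.End ℝ m) ∘ₗ (f j : Module.End ℝ m))
          = if i = j then 1 else 0) →
      ∀ A : h,
        killingForm ℝ G (e.symm (A, 0)) (e.symm (A, 0))
          = LinearMap.trace ℝ m ((A : Module.End ℝ m) ∘ₗ (A : Module.End ℝ m))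
            + ∑ j, LinearMap.trace ℝ m
                (((⁅A, f j⁆ : h) : Module.End ℝ m) ∘ₗ ((⁅A, f j⁆ : h) : Module.End ℝ m)) := by
    intro ι _ _ f hspan honb A
    rw [hkil, hφA, LinearMap.prodMap_comp, LinearMap.trace_prodMap']
    have hK : ∀ i j, traceFormOn h (f i) (f j) = if i = j then 1 else 0 := by
      intro i j
      rw [traceFormOn_apply, Module.End.mul_eq_comp]
      exact honb i j
    have htr := trace_eq_sum_form' (traceFormOn h) f hspan hK
      (LieAlgebra.ad ℝ h A ∘ₗ LieAlgebra.ad ℝ h A)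
    have keyj : ∀ B : h, traceFormOn h ⁅A, ⁅A, B⁆⁆ B
        = LinearMap.trace ℝ m
            (((⁅A, B⁆ : h) : Module.End ℝ m) ∘ₗ ((⁅A, B⁆ : h) : Module.End ℝ m)) := by
      intro B
      have hc : ((⁅A, B⁆ : h) : Module.End ℝ m)
          = ⁅(A : Module.End ℝ m), (B : Module.End ℝ m)⁆ := rfl
      have hcc : ((⁅A, ⁅A, B⁆⁆ : h) : Module.End ℝ m)
          = ⁅(A : Module.End ℝ m), ((⁅A, B⁆ : h) : Module.End ℝ m)⁆ := rfl
      rw [traceFormOn_apply, hcc, trace_lie_mul', ← lie_skew, mul_neg, map_neg, neg_neg,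
        ← trace_lie_mul', ← hc, Module.End.mul_eq_comp]
    rw [htr, add_comm]
    congr 1
    refine Finset.sum_congr rfl fun j _ => ?_
    have had : (LieAlgebra.ad ℝ h A ∘ₗ LieAlgebra.ad ℝ h A) (f j) = ⁅A, ⁅A, f j⁆⁆ := by
      simp [LieAlgebra.ad_apply]
    rw [had, keyj]
  -- Part 3 ingredients
  have hKsymm : (traceFormOn h).IsSymm := by
    constructor
    intro B C
    simp only [traceFormOn_apply, RingHom.id_apply]
    rw [LinearMap.trace_mul_comm]
  have hKpos : ∀ C : h, C ≠ 0 → 0 < traceFormOn h C C := by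
    intro C hC
    have hCne : (C : Module.End ℝ m) ≠ 0 := fun h0 => hC (Subtype.ext h0)
    have hlt := (skew_trace_sq_aux (C : Module.End ℝ m) (hskew _ C.2)).2 hCne
    rw [traceFormOn_apply, Module.End.mul_eq_comp]
    linarith
  obtain ⟨n, f, hspan, honbK⟩ := exists_onb_family' (traceFormOn h) hKsymm hKpos
  refine ⟨part1, part2, ?_⟩
  intro A hA
  have hAne : (A : Module.End ℝ m) ≠ 0 := fun h0 => hA (Subtype.ext h0)
  have honb' : ∀ i j, - LinearMap.trace ℝ m
      ((f i : Module.End ℝ m) ∘ₗ (f j : Module.End ℝ m)) = if i = j then 1 else 0 := by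
    intro i j
    rw [← Module.End.mul_eq_comp]
    exact honbK i j
  rw [part2 (Fin n) f hspan honb' A]
  have h1 : LinearMap.trace ℝ m ((A : Module.End ℝ m) ∘ₗ (A : Module.End ℝ m)) < 0 :=
    (skew_trace_sq_aux _ (hskew _ A.2)).2 hAne
  have h2 : ∑ j, LinearMap.trace ℝ m
      (((⁅A, f j⁆ : h) : Module.End ℝ m) ∘ₗ ((⁅A, f j⁆ : h) : Module.End ℝ m)) ≤ 0 :=
    Finset.sum_nonpos fun j _ =>
      (skew_trace_sq_aux _ (hskew _ (⁅A, f j⁆ : h).2)).1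
  linarith
end
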